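/- arXiv:0803.1146 — 4 statements merged into one kernel-verified Lean document; each statement's English description precedes it below -/
import Mathlib

section
/- Duality for the type A_1 double affine braid group: set Y^d = q^{-1}. Then the type A_1 double affine braid group B̃ is generated by T_0^∨, T_1^∨, g^∨, Y^{ω^∨} and q^{1/2}, subject to the relations (g^∨)² = 1, T_0^∨ = g^∨ T_1^∨ (g^∨)^{-1}, g^∨ Y^{ω^∨} = q^{-1/2} Y^{−ω^∨} g^∨, T_1^{-1} Y^{ω^∨} T_1^{-1} = Y^{−ω^∨}, and (T_0^∨)^{-1} Y^{−ω^∨} (T_0^∨)^{-1} = q Y^{ω^∨}. -/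
/-!
Duality for the type `A₁` double affine braid group.

The type `A₁` double affine braid group `B̃` is presented by generators
`T₀, T₁, g, X^ω, q^{1/2}` and the relations
`T₀ = gT₁g⁻¹`, `g² = 1`, `q^{1/2}` central, `gX^ω = q^{1/2}X^{-ω}g`,
`T₁X^ωT₁ = X^{-ω}`, `T₀X^{-ω}T₀ = q⁻¹X^ω`.

We package a group with this presentation (the relations, the fact that the generators
generate, and the universal property of the presentation) as a structure `A1Braid`.

The duality theorem asserts that, setting `Y^d = q⁻¹`, the same group is presented by the
dual generators `T₀^∨ = (X^{2ω}T₁)⁻¹`, `T₁^∨ = T₁`, `g^∨ = X^ωT₁`, `Y^{ω^∨} = gT₁` and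
`q^{1/2}`, subject to the dual relations
`(g^∨)² = 1`, `T₀^∨ = g^∨T₁^∨(g^∨)⁻¹`, `g^∨Y^{ω^∨} = q^{-1/2}Y^{-ω^∨}g^∨`,
`T₁⁻¹Y^{ω^∨}T₁⁻¹ = Y^{-ω^∨}`, `(T₀^∨)⁻¹Y^{-ω^∨}(T₀^∨)⁻¹ = qY^{ω^∨}`.
-/

/-- The defining relations of the type `A₁` double affine braid group on the
generators `T₀, T₁, g, X^ω, q^{1/2}`. -/
def A1OrigRel (B : Type) [Group B] (T0 T1 g Xω qh : B) : Prop :=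
  T0 = g * T1 * g⁻¹ ∧
  g * g = 1 ∧
  (∀ b : B, qh * b = b * qh) ∧
  g * Xω = qh * Xω⁻¹ * g ∧
  T1 * Xω * T1 = Xω⁻¹ ∧
  T0 * Xω⁻¹ * T0 = (qh * qh)⁻¹ * Xω

/-- The dual relations of the type `A₁` double affine braid group, on the dual
generators `T₀^∨, T₁^∨, g^∨, Y^{ω^∨}, q^{1/2}` (with the convention `Y^d = q⁻¹`). -/
def A1DualRel (C : Type) [Group C] (T0v T1v gv Yω qh : C) : Prop :=
  gv * gv = 1 ∧
  T0v = gv * T1v * gv⁻¹ ∧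
  (∀ c : C, qh * c = c * qh) ∧
  gv * Yω = qh⁻¹ * Yω⁻¹ * gv ∧
  T1v⁻¹ * Yω * T1v⁻¹ = Yω⁻¹ ∧
  T0v⁻¹ * Yω⁻¹ * T0v⁻¹ = qh * qh * Yω

/-- The type `A₁` double affine braid group: a group `B` together with generators
`T₀, T₁, g, X^ω, q^{1/2}` satisfying the defining relations, generating `B`, and
satisfying the universal property of the presentation. -/
structure A1Braid where
  B : Type
  [groupB : Group B]
  T0 : B
  T1 : B
  g : B
  Xω : B
  qh : B
  rels : A1OrigRel B T0 T1 g Xω qh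
  gen : Subgroup.closure {T0, T1, g, Xω, qh} = (⊤ : Subgroup B)
  univ : ∀ (C : Type) [Group C] (T0' T1' g' Xω' qh' : C),
      A1OrigRel C T0' T1' g' Xω' qh' →
      ∃! φ : B →* C, φ T0 = T0' ∧ φ T1 = T1' ∧ φ g = g' ∧ φ Xω = Xω' ∧ φ qh = qh'

attribute [instance] A1Braid.groupB

namespace A1Braid

variable (A : A1Braid)

/-- `Y^{ω^∨} = gT₁`. -/
def Yω : A.B := A.g * A.T1

/-- `g^∨ = X^ωT₁`. -/
def gv : A.B := A.Xω * A.T1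

/-- `(T₀^∨)⁻¹ = X^φ T₁^∨ = X^{2ω}T₁`. -/
def T0v : A.B := (A.Xω * A.Xω * A.T1)⁻¹

end A1Braid

/-- Duality for the type `A₁` double affine braid group: with
`Y^d = q⁻¹`, the group `B̃` is generated by `T₀^∨, T₁^∨, g^∨, Y^{ω^∨}, q^{1/2}`
subject exactly to the dual relations: the dual relations hold, the dual generators
generate `B̃`, and `B̃` has the universal property of the dual presentation. -/
theorem statement10 (A : A1Braid) :
    A1DualRel A.B A.T0v A.T1 A.gv A.Yω A.qh ∧
    Subgroup.closure {A.T0v, A.T1, A.gv, A.Yω, A.qh} = (⊤ : Subgroup A.B) ∧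
    (∀ (C : Type) [Group C] (T0' T1' g' Y' qh' : C),
      A1DualRel C T0' T1' g' Y' qh' →
      ∃! φ : A.B →* C,
        φ A.T0v = T0' ∧ φ A.T1 = T1' ∧ φ A.gv = g' ∧ φ A.Yω = Y' ∧ φ A.qh = qh') := by
  obtain ⟨r1, r2, r3, r4, r5, r6⟩ := A.rels
  have f4 : A.g⁻¹ = A.g := inv_eq_of_mul_eq_one_right r2
  have f1 : A.Xω * A.T1 = A.T1⁻¹ * A.Xω⁻¹ := by rw [← r5]; group
  have qL : ∀ a b : A.B, a * A.qh * b = A.qh * (a * b) := by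
    intro a b; rw [← r3, mul_assoc]
  -- representations of the original generators in terms of the dual ones
  have hgrep : A.g = A.Yω * A.T1⁻¹ := by
    show A.g = A.g * A.T1 * A.T1⁻¹; group
  have hXrep : A.Xω = A.gv * A.T1⁻¹ := by
    show A.Xω = A.Xω * A.T1 * A.T1⁻¹; group
  -- the dual relations
  have d1 : A.gv * A.gv = 1 := by
    show A.Xω * A.T1 * (A.Xω * A.T1) = 1
    calc A.Xω * A.T1 * (A.Xω * A.T1) = A.Xω * (A.T1 * A.Xω * A.T1) := by group
      _ = A.Xω * A.Xω⁻¹ := by rw [r5]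
      _ = 1 := by group
  have d2 : A.T0v = A.gv * A.T1 * A.gv⁻¹ := by
    show (A.Xω * A.Xω * A.T1)⁻¹ = A.Xω * A.T1 * A.T1 * (A.Xω * A.T1)⁻¹
    calc (A.Xω * A.Xω * A.T1)⁻¹ = A.T1⁻¹ * A.Xω⁻¹ * A.Xω⁻¹ := by group
      _ = A.Xω * A.T1 * A.Xω⁻¹ := by rw [← f1]
      _ = A.Xω * A.T1 * A.T1 * (A.Xω * A.T1)⁻¹ := by group
  have d4 : A.gv * A.Yω = A.qh⁻¹ * A.Yω⁻¹ * A.gv := by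
    show A.Xω * A.T1 * (A.g * A.T1) = A.qh⁻¹ * (A.g * A.T1)⁻¹ * (A.Xω * A.T1)
    refine Eq.symm ?_
    calc A.qh⁻¹ * (A.g * A.T1)⁻¹ * (A.Xω * A.T1)
        = A.qh⁻¹ * A.T1⁻¹ * (A.g⁻¹ * A.Xω) * A.T1 := by group
      _ = A.qh⁻¹ * A.T1⁻¹ * (A.g * A.Xω) * A.T1 := by rw [f4]
      _ = A.qh⁻¹ * A.T1⁻¹ * (A.qh * A.Xω⁻¹ * A.g) * A.T1 := by rw [r4]
      _ = A.qh⁻¹ * A.T1⁻¹ * A.qh * (A.Xω⁻¹ * A.g * A.T1) := by group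
      _ = A.qh⁻¹ * A.qh * (A.T1⁻¹ * (A.Xω⁻¹ * A.g * A.T1)) := by
            rw [mul_assoc A.qh⁻¹ A.T1⁻¹ A.qh, ← r3]; group
      _ = A.T1⁻¹ * A.Xω⁻¹ * (A.g * A.T1) := by group
      _ = A.Xω * A.T1 * (A.g * A.T1) := by rw [← f1]
  have d5 : A.T1⁻¹ * A.Yω * A.T1⁻¹ = A.Yω⁻¹ := by
    show A.T1⁻¹ * (A.g * A.T1) * A.T1⁻¹ = (A.g * A.T1)⁻¹
    calc A.T1⁻¹ * (A.g * A.T1) * A.T1⁻¹ = A.T1⁻¹ * A.g := by group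
      _ = A.T1⁻¹ * A.g⁻¹ := by rw [f4]
      _ = (A.g * A.T1)⁻¹ := by group
  have d6 : A.T0v⁻¹ * A.Yω⁻¹ * A.T0v⁻¹ = A.qh * A.qh * A.Yω := by
    show ((A.Xω * A.Xω * A.T1)⁻¹)⁻¹ * (A.g * A.T1)⁻¹ * ((A.Xω * A.Xω * A.T1)⁻¹)⁻¹
        = A.qh * A.qh * (A.g * A.T1)
    calc ((A.Xω * A.Xω * A.T1)⁻¹)⁻¹ * (A.g * A.T1)⁻¹ * ((A.Xω * A.Xω * A.T1)⁻¹)⁻¹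
        = A.Xω * A.Xω * (A.g⁻¹ * A.Xω) * A.Xω * A.T1 := by
            simp only [inv_inv, mul_inv_rev]; group
      _ = A.Xω * A.Xω * (A.g * A.Xω) * A.Xω * A.T1 := by rw [f4]
      _ = A.Xω * A.Xω * (A.qh * A.Xω⁻¹ * A.g) * A.Xω * A.T1 := by rw [r4]
      _ = A.Xω * A.Xω * A.qh * (A.Xω⁻¹ * (A.g * A.Xω) * A.T1) := by group
      _ = A.qh * (A.Xω * A.Xω * (A.Xω⁻¹ * (A.g * A.Xω) * A.T1)) := qL _ _
      _ = A.qh * (A.Xω * A.Xω * (A.Xω⁻¹ * (A.qh * A.Xω⁻¹ * A.g) * A.T1)) := by rw [r4]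
      _ = A.qh * (A.Xω * A.qh * (A.Xω⁻¹ * A.g * A.T1)) := by group
      _ = A.qh * (A.qh * (A.Xω * (A.Xω⁻¹ * A.g * A.T1))) := by rw [qL]
      _ = A.qh * A.qh * (A.g * A.T1) := by group
  refine ⟨⟨d1, d2, r3, d4, d5, d6⟩, ?_, ?_⟩
  · -- generation
    rw [eq_top_iff, ← A.gen]
    refine (Subgroup.closure_le _).mpr ?_
    have hT1 : A.T1 ∈ Subgroup.closure {A.T0v, A.T1, A.gv, A.Yω, A.qh} :=
      Subgroup.subset_closure (by simp)
    have hgv : A.gv ∈ Subgroup.closure {A.T0v, A.T1, A.gv, A.Yω, A.qh} :=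
      Subgroup.subset_closure (by simp)
    have hYω : A.Yω ∈ Subgroup.closure {A.T0v, A.T1, A.gv, A.Yω, A.qh} :=
      Subgroup.subset_closure (by simp)
    have hqh : A.qh ∈ Subgroup.closure {A.T0v, A.T1, A.gv, A.Yω, A.qh} :=
      Subgroup.subset_closure (by simp)
    have hgmem : A.g ∈ Subgroup.closure {A.T0v, A.T1, A.gv, A.Yω, A.qh} := by
      rw [hgrep]; exact mul_mem hYω (inv_mem hT1)
    have hXmem : A.Xω ∈ Subgroup.closure {A.T0v, A.T1, A.gv, A.Yω, A.qh} := by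
      rw [hXrep]; exact mul_mem hgv (inv_mem hT1)
    have hT0mem : A.T0 ∈ Subgroup.closure {A.T0v, A.T1, A.gv, A.Yω, A.qh} := by
      rw [r1]; exact mul_mem (mul_mem hgmem hT1) (inv_mem hgmem)
    intro x hx
    simp only [Set.mem_insert_iff, Set.mem_singleton_iff] at hx
    rcases hx with rfl | rfl | rfl | rfl | rfl <;> assumption
  · -- universal property
    intro C _ T0' T1' g' Y' qh' hrel
    obtain ⟨e1, e2, e3, e4, e5, e6⟩ := hrel
    have f4c : g'⁻¹ = g' := inv_eq_of_mul_eq_one_right e1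
    have qiLc : ∀ a b : C, a * qh'⁻¹ * b = qh'⁻¹ * (a * b) := by
      intro a b
      have h : a * qh'⁻¹ = qh'⁻¹ * a := by
        calc a * qh'⁻¹ = qh'⁻¹ * (qh' * a) * qh'⁻¹ := by group
          _ = qh'⁻¹ * (a * qh') * qh'⁻¹ := by rw [e3]
          _ = qh'⁻¹ * a := by group
      rw [h, mul_assoc]
    have a1 : T1'⁻¹ * Y' = Y'⁻¹ * T1' := by rw [← e5]; group
    have a2 : Y' * T1'⁻¹ = T1' * Y'⁻¹ := by rw [← e5]; group
    have b1 : Y'⁻¹ * g' = qh' * g' * Y' := by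
      rw [mul_assoc, e4]; group
    have b2 : Y' * g' = qh'⁻¹ * g' * Y'⁻¹ := by
      calc Y' * g' = Y' * (qh'⁻¹ * (qh' * g' * Y') * Y'⁻¹) := by group
        _ = Y' * (qh'⁻¹ * (Y'⁻¹ * g') * Y'⁻¹) := by rw [← b1]
        _ = Y' * qh'⁻¹ * (Y'⁻¹ * g' * Y'⁻¹) := by group
        _ = qh'⁻¹ * (Y' * (Y'⁻¹ * g' * Y'⁻¹)) := qiLc _ _
        _ = qh'⁻¹ * g' * Y'⁻¹ := by group
    have c1 : Y'⁻¹ * T1' * Y'⁻¹ = T1'⁻¹ := by rw [← a1]; group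
    -- the original relations on the candidate generators in C
    have rc2 : (Y' * T1'⁻¹) * (Y' * T1'⁻¹) = 1 := by
      calc (Y' * T1'⁻¹) * (Y' * T1'⁻¹) = Y' * (T1'⁻¹ * Y' * T1'⁻¹) := by group
        _ = Y' * Y'⁻¹ := by rw [e5]
        _ = 1 := by group
    have rc4 : (Y' * T1'⁻¹) * (g' * T1'⁻¹) = qh' * (g' * T1'⁻¹)⁻¹ * (Y' * T1'⁻¹) := by
      refine Eq.symm ?_
      calc qh' * (g' * T1'⁻¹)⁻¹ * (Y' * T1'⁻¹)
          = qh' * T1' * (g'⁻¹ * Y') * T1'⁻¹ := by group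
        _ = qh' * T1' * (g' * Y') * T1'⁻¹ := by rw [f4c]
        _ = qh' * T1' * (qh'⁻¹ * Y'⁻¹ * g') * T1'⁻¹ := by rw [e4]
        _ = qh' * T1' * qh'⁻¹ * (Y'⁻¹ * g' * T1'⁻¹) := by group
        _ = qh'⁻¹ * (qh' * T1' * (Y'⁻¹ * g' * T1'⁻¹)) := qiLc _ _
        _ = T1' * Y'⁻¹ * (g' * T1'⁻¹) := by group
        _ = Y' * T1'⁻¹ * (g' * T1'⁻¹) := by rw [← a2]
    have rc5 : T1' * (g' * T1'⁻¹) * T1' = (g' * T1'⁻¹)⁻¹ := by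
      calc T1' * (g' * T1'⁻¹) * T1' = T1' * g' := by group
        _ = T1' * g'⁻¹ := by rw [f4c]
        _ = (g' * T1'⁻¹)⁻¹ := by group
    have rc6 : ((Y' * T1'⁻¹) * T1' * (Y' * T1'⁻¹)⁻¹) * (g' * T1'⁻¹)⁻¹ *
        ((Y' * T1'⁻¹) * T1' * (Y' * T1'⁻¹)⁻¹) = (qh' * qh')⁻¹ * (g' * T1'⁻¹) := by
      calc ((Y' * T1'⁻¹) * T1' * (Y' * T1'⁻¹)⁻¹) * (g' * T1'⁻¹)⁻¹ *
            ((Y' * T1'⁻¹) * T1' * (Y' * T1'⁻¹)⁻¹)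
          = Y' * T1' * Y'⁻¹ * T1' * (g'⁻¹ * Y') * T1' * Y'⁻¹ := by group
        _ = Y' * T1' * Y'⁻¹ * T1' * (g' * Y') * T1' * Y'⁻¹ := by rw [f4c]
        _ = Y' * T1' * Y'⁻¹ * T1' * (qh'⁻¹ * Y'⁻¹ * g') * T1' * Y'⁻¹ := by rw [e4]
        _ = Y' * T1' * Y'⁻¹ * T1' * qh'⁻¹ * (Y'⁻¹ * g' * T1' * Y'⁻¹) := by group
        _ = qh'⁻¹ * (Y' * T1' * Y'⁻¹ * T1' * (Y'⁻¹ * g' * T1' * Y'⁻¹)) := qiLc _ _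
        _ = qh'⁻¹ * (Y' * T1' * (Y'⁻¹ * T1' * Y'⁻¹) * (g' * T1' * Y'⁻¹)) := by group
        _ = qh'⁻¹ * (Y' * T1' * T1'⁻¹ * (g' * T1' * Y'⁻¹)) := by rw [c1]
        _ = qh'⁻¹ * (Y' * g' * (T1' * Y'⁻¹)) := by group
        _ = qh'⁻¹ * (qh'⁻¹ * g' * Y'⁻¹ * (T1' * Y'⁻¹)) := by rw [b2]
        _ = qh'⁻¹ * qh'⁻¹ * (g' * (Y'⁻¹ * T1' * Y'⁻¹)) := by group
        _ = qh'⁻¹ * qh'⁻¹ * (g' * T1'⁻¹) := by rw [c1]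
        _ = (qh' * qh')⁻¹ * (g' * T1'⁻¹) := by group
    obtain ⟨φ, ⟨h0, h1, hg, hX, hq⟩, huniq⟩ :=
      A.univ C ((Y' * T1'⁻¹) * T1' * (Y' * T1'⁻¹)⁻¹) T1' (Y' * T1'⁻¹) (g' * T1'⁻¹) qh'
        ⟨rfl, rc2, e3, rc4, rc5, rc6⟩
    have φgv : φ A.gv = g' := by
      rw [show A.gv = A.Xω * A.T1 from rfl, map_mul, hX, h1]; group
    have φYω : φ A.Yω = Y' := by
      rw [show A.Yω = A.g * A.T1 from rfl, map_mul, hg, h1]; group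
    have φT0v : φ A.T0v = T0' := by
      rw [show A.T0v = (A.Xω * A.Xω * A.T1)⁻¹ from rfl, map_inv, map_mul, map_mul, hX, h1]
      calc (g' * T1'⁻¹ * (g' * T1'⁻¹) * T1')⁻¹ = g'⁻¹ * (T1' * g'⁻¹) := by group
        _ = g' * (T1' * g') := by rw [f4c]
        _ = g' * T1' * g'⁻¹ := by rw [f4c]; group
        _ = T0' := e2.symm
    refine ⟨φ, ⟨φT0v, h1, φgv, φYω, hq⟩, ?_⟩
    intro ψ ⟨p0, p1, pg2, pY2, pq2⟩
    have ψg : ψ A.g = Y' * T1'⁻¹ := by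
      rw [hgrep, map_mul, map_inv, pY2, p1]
    have ψX : ψ A.Xω = g' * T1'⁻¹ := by
      rw [hXrep, map_mul, map_inv, pg2, p1]
    have ψT0 : ψ A.T0 = (Y' * T1'⁻¹) * T1' * (Y' * T1'⁻¹)⁻¹ := by
      rw [r1, map_mul, map_mul, map_inv, ψg, p1]
    exact huniq ψ ⟨ψT0, p1, ψg, ψX, pq2⟩
end

section
/- In the type A_1 double affine Hecke algebra, with X^{−2ω} = s_1^∨ s_0^∨ a reduced word, one has the expansion τ_1^∨ τ_0^∨ = X^{−2ω} + T_1^∨ · t^{-1/2}(1−t)/(1 − Y^{−α_0^∨}) + X^{2ω} T_1^∨ · t^{-1/2}(1−t)/(1 − Y^{−s_0 α_1^∨}) + (t^{-1/2}(1−t)/(1 − Y^{−s_0 α_1^∨})) · (t^{-1/2}(1−t)Y^{−α_0^∨}/(1 − Y^{−α_0^∨})), where Y^{−α_0^∨} = qY^{α^∨} and Y^{−s_0α_1^∨} = Y^{α^∨ + 2d} = q²Y^{α^∨}. -/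
noncomputable section

/-!
In the type `A₁` double affine Hecke algebra, with `X^{-2ω} = s₁^∨s₀^∨` a reduced word,
the product of intertwiners `τ₁^∨τ₀^∨` has the alcove walk expansion
`τ₁^∨τ₀^∨ = X^{-2ω} + T₁^∨ · t^{-1/2}(1−t)/(1−Y^{-α₀^∨})
  + X^{2ω}T₁^∨ · t^{-1/2}(1−t)/(1−Y^{-s₀α₁^∨})
  + (t^{-1/2}(1−t)/(1−Y^{-s₀α₁^∨}))·(t^{-1/2}(1−t)Y^{-α₀^∨}/(1−Y^{-α₀^∨}))`,
where `Y^{-α₀^∨} = qY^{α^∨}` and `Y^{-s₀α₁^∨} = Y^{α^∨+2d} = q²Y^{α^∨}`.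
-/

/-- The type `A₁` double affine Hecke algebra: the group algebra over `K` of the type
`A₁` double affine braid group (generated by `T₀, T₁, g, X^ω, q^{1/2}`) with the
Hecke relations `Tᵢ² = (t^{1/2}−t^{-1/2})Tᵢ + 1` for equal parameters
`t₀ = t₁ = t = q^c`.  The scalars `q^{1/2}` and `t^{1/2}` are units of `K`. -/
structure A1DAHA where
  K : Type
  [commRingK : CommRing K]
  /-- `q^{1/2}` -/
  qsq : Kˣ
  /-- `t^{1/2}` -/
  tsq : Kˣ
  H : Type
  [ringH : Ring H]
  [algH : Algebra K H]
  T0 : Hˣ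
  T1 : Hˣ
  g : Hˣ
  Xω : Hˣ
  rel_T0 : T0 = g * T1 * g⁻¹
  rel_g : g * g = 1
  rel_gX : ((g * Xω : Hˣ) : H) = algebraMap K H (qsq : K) * ((Xω⁻¹ * g : Hˣ) : H)
  rel_T1X : T1 * Xω * T1 = Xω⁻¹
  rel_T0X : ((T0 * Xω⁻¹ * T0 : Hˣ) : H)
      = algebraMap K H ((((qsq * qsq)⁻¹ : Kˣ)) : K) * ((Xω : Hˣ) : H)
  quad0 : ((T0 : H)) ^ 2
      = algebraMap K H ((tsq : K) - ((tsq⁻¹ : Kˣ) : K)) * (T0 : H) + 1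
  quad1 : ((T1 : H)) ^ 2
      = algebraMap K H ((tsq : K) - ((tsq⁻¹ : Kˣ) : K)) * (T1 : H) + 1

attribute [instance] A1DAHA.commRingK A1DAHA.ringH A1DAHA.algH

namespace A1DAHA

variable (A : A1DAHA)

/-- `q = (q^{1/2})²`. -/
def q : A.K := (A.qsq : A.K) ^ 2

/-- `t = (t^{1/2})²`. -/
def t : A.K := (A.tsq : A.K) ^ 2

/-- `Y^{α^∨} = Y^{2ω^∨} = (gT₁)²`, since `Y^{ω^∨} = gT₁`. -/
def Yα : A.Hˣ := (A.g * A.T1) * (A.g * A.T1)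

/-- `Y^{-α₀^∨} = qY^{α^∨}`. -/
def Yma0 : A.H := algebraMap A.K A.H A.q * (A.Yα : A.H)

/-- `Y^{-s₀α₁^∨} = Y^{α^∨+2d} = q²Y^{α^∨}`. -/
def Yms0a1 : A.H := algebraMap A.K A.H (A.q ^ 2) * (A.Yα : A.H)

/-- The scalar `t^{-1/2}(1−t)`. -/
def tfac : A.K := ((A.tsq⁻¹ : A.Kˣ) : A.K) * (1 - A.t)

/-- `(T₀^∨)⁻¹ = X^φT₁ = X^{2ω}T₁`, so `T₀^∨ = (X^{2ω}T₁)⁻¹`. -/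
def T0v : A.Hˣ := (A.Xω * A.Xω * A.T1)⁻¹

/-- The intertwiner `τ₁^∨ = T₁^∨ + t^{-1/2}(1−t)/(1−Y^{-α₁^∨})`. -/
def tau1 : A.H :=
  (A.T1 : A.H) + algebraMap A.K A.H A.tfac * Ring.inverse (1 - ((A.Yα⁻¹ : A.Hˣ) : A.H))

/-- The intertwiner `τ₀^∨ = T₀^∨ + t^{-1/2}(1−t)/(1−Y^{-α₀^∨})`. -/
def tau0 : A.H :=
  (A.T0v : A.H) + algebraMap A.K A.H A.tfac * Ring.inverse (1 - A.Yma0)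

/-- `a = t^{1/2} - t^{-1/2}`. -/
def aa : A.K := (A.tsq : A.K) - ((A.tsq⁻¹ : A.Kˣ) : A.K)

/-- `W = X^{2ω}T₁ = (T₀^∨)⁻¹`. -/
def W : A.Hˣ := A.Xω * A.Xω * A.T1

/-- `q⁻¹`. -/
def qi : A.K := (((A.qsq * A.qsq)⁻¹ : A.Kˣ) : A.K)

lemma T0v_eq : A.T0v = (A.W)⁻¹ := rfl

lemma ginv : A.g⁻¹ = A.g := inv_eq_of_mul_eq_one_right A.rel_g

lemma Y_eq : A.Yα = A.T0 * A.T1 := by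
  rw [Yα, A.rel_T0, ginv]; group

lemma XTX : A.Xω * A.T1 * A.Xω = A.T1⁻¹ := by
  have h : (A.Xω * A.T1 * A.Xω) * A.T1 = 1 := by
    calc (A.Xω * A.T1 * A.Xω) * A.T1 = A.Xω * (A.T1 * A.Xω * A.T1) := by group
    _ = 1 := by rw [A.rel_T1X]; group
  exact eq_inv_of_mul_eq_one_left h

lemma scalar_tfac : A.tfac = -A.aa := by
  have h1 : ((A.tsq⁻¹ : A.Kˣ) : A.K) * (A.tsq : A.K) = 1 := A.tsq.inv_mul
  simp only [tfac, t, aa]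
  linear_combination (-(A.tsq : A.K)) * h1

lemma scalar_qqi : A.q * A.qi = 1 := by
  have h1 : ((A.qsq * A.qsq : A.Kˣ) : A.K) * (((A.qsq * A.qsq)⁻¹ : A.Kˣ) : A.K) = 1 :=
    (A.qsq * A.qsq).mul_inv
  simp only [q, qi]
  calc (A.qsq : A.K) ^ 2 * (((A.qsq * A.qsq)⁻¹ : A.Kˣ) : A.K)
      = ((A.qsq * A.qsq : A.Kˣ) : A.K) * (((A.qsq * A.qsq)⁻¹ : A.Kˣ) : A.K) := by
        push_cast; ring
    _ = 1 := h1

lemma quad1' : (A.T1 : A.H) * ((A.T1 : A.H) - algebraMap A.K A.H A.aa) = 1 := by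
  have hc := Algebra.commutes A.aa (A.T1 : A.H)
  rw [mul_sub, ← sq, A.quad1]
  simp only [aa] at hc ⊢
  rw [← hc]
  noncomm_ring

lemma T1inv : ((A.T1⁻¹ : A.Hˣ) : A.H) = (A.T1 : A.H) - algebraMap A.K A.H A.aa := by
  calc ((A.T1⁻¹ : A.Hˣ) : A.H)
      = ((A.T1⁻¹ : A.Hˣ) : A.H) * ((A.T1 : A.H) * ((A.T1 : A.H) - algebraMap A.K A.H A.aa)) := by
        rw [A.quad1', mul_one]
    _ = (((A.T1⁻¹ : A.Hˣ) : A.H) * (A.T1 : A.H)) * ((A.T1 : A.H) - algebraMap A.K A.H A.aa) := by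
        rw [mul_assoc]
    _ = (A.T1 : A.H) - algebraMap A.K A.H A.aa := by rw [A.T1.inv_mul, one_mul]

lemma quad0' : (A.T0 : A.H) * ((A.T0 : A.H) - algebraMap A.K A.H A.aa) = 1 := by
  have hc := Algebra.commutes A.aa (A.T0 : A.H)
  rw [mul_sub, ← sq, A.quad0]
  simp only [aa] at hc ⊢
  rw [← hc]
  noncomm_ring

lemma T0inv : ((A.T0⁻¹ : A.Hˣ) : A.H) = (A.T0 : A.H) - algebraMap A.K A.H A.aa := by
  calc ((A.T0⁻¹ : A.Hˣ) : A.H)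
      = ((A.T0⁻¹ : A.Hˣ) : A.H) * ((A.T0 : A.H) * ((A.T0 : A.H) - algebraMap A.K A.H A.aa)) := by
        rw [A.quad0', mul_one]
    _ = (((A.T0⁻¹ : A.Hˣ) : A.H) * (A.T0 : A.H)) * ((A.T0 : A.H) - algebraMap A.K A.H A.aa) := by
        rw [mul_assoc]
    _ = (A.T0 : A.H) - algebraMap A.K A.H A.aa := by rw [A.T0.inv_mul, one_mul]


lemma TX : A.T1 * A.Xω = A.Xω⁻¹ * A.T1⁻¹ := by
  rw [← A.XTX]; group

lemma XT : A.Xω * A.T1 = A.T1⁻¹ * A.Xω⁻¹ := by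
  rw [← A.XTX]; group

lemma XTiX : A.Xω * A.T1⁻¹ * A.Xω⁻¹ = A.W := by
  rw [← A.XTX, W]; group

lemma WW_units : A.W * A.W = A.Xω * (A.T1⁻¹ * A.T1⁻¹) * A.Xω⁻¹ := by
  calc A.W * A.W = A.Xω * A.Xω * (A.T1 * A.Xω) * (A.Xω * A.T1) := by rw [W]; group
  _ = A.Xω * A.Xω * (A.Xω⁻¹ * A.T1⁻¹) * (A.T1⁻¹ * A.Xω⁻¹) := by rw [A.TX, A.XT]
  _ = A.Xω * (A.T1⁻¹ * A.T1⁻¹) * A.Xω⁻¹ := by group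

lemma T1invsq : ((A.T1⁻¹ : A.Hˣ) : A.H) * ((A.T1⁻¹ : A.Hˣ) : A.H)
    = 1 - algebraMap A.K A.H A.aa * ((A.T1⁻¹ : A.Hˣ) : A.H) := by
  nth_rewrite 2 [A.T1inv]
  rw [mul_sub, A.T1.inv_mul, ← Algebra.commutes]

lemma Wsq : ((A.W : A.Hˣ) : A.H) * ((A.W : A.Hˣ) : A.H)
    = 1 - algebraMap A.K A.H A.aa * ((A.W : A.Hˣ) : A.H) := by
  have h1 : ((A.W : A.Hˣ) : A.H) * ((A.W : A.Hˣ) : A.H)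
      = (A.Xω : A.H) * (((A.T1⁻¹ : A.Hˣ) : A.H) * ((A.T1⁻¹ : A.Hˣ) : A.H))
        * ((A.Xω⁻¹ : A.Hˣ) : A.H) := by
    rw [← Units.val_mul, A.WW_units]; push_cast; ring_nf
  rw [h1, A.T1invsq, mul_sub, sub_mul, mul_one, Units.mul_inv]
  congr 1
  calc (A.Xω : A.H) * (algebraMap A.K A.H A.aa * ((A.T1⁻¹ : A.Hˣ) : A.H))
        * ((A.Xω⁻¹ : A.Hˣ) : A.H)
      = algebraMap A.K A.H A.aa *
          ((A.Xω : A.H) * ((A.T1⁻¹ : A.Hˣ) : A.H) * ((A.Xω⁻¹ : A.Hˣ) : A.H)) := by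
        rw [← mul_assoc, ← Algebra.commutes, mul_assoc, mul_assoc, mul_assoc]
    _ = algebraMap A.K A.H A.aa * ((A.W : A.Hˣ) : A.H) := by
        rw [← Units.val_mul, ← Units.val_mul, A.XTiX]

lemma Winv : ((A.W⁻¹ : A.Hˣ) : A.H) = ((A.W : A.Hˣ) : A.H) + algebraMap A.K A.H A.aa := by
  have h : ((A.W : A.Hˣ) : A.H) * (((A.W : A.Hˣ) : A.H) + algebraMap A.K A.H A.aa) = 1 := by
    rw [mul_add, A.Wsq, ← Algebra.commutes, sub_add_cancel]
  calc ((A.W⁻¹ : A.Hˣ) : A.H)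
      = ((A.W⁻¹ : A.Hˣ) : A.H) *
          (((A.W : A.Hˣ) : A.H) * (((A.W : A.Hˣ) : A.H) + algebraMap A.K A.H A.aa)) := by
        rw [h, mul_one]
    _ = (((A.W⁻¹ : A.Hˣ) : A.H) * ((A.W : A.Hˣ) : A.H)) *
          (((A.W : A.Hˣ) : A.H) + algebraMap A.K A.H A.aa) := by rw [mul_assoc]
    _ = _ := by rw [A.W.inv_mul, one_mul]


/-- Move a central scalar to the front. -/
lemma cmove (r : A.K) (x y : A.H) :
    x * (algebraMap A.K A.H r * y) = algebraMap A.K A.H r * (x * y) := by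
  rw [← mul_assoc, ← Algebra.commutes, mul_assoc]

/-- Collect two scalars. -/
lemma ccol (r s : A.K) (x : A.H) :
    algebraMap A.K A.H r * (algebraMap A.K A.H s * x) = algebraMap A.K A.H (r * s) * x := by
  rw [← mul_assoc, ← map_mul]

lemma XT0 : ((A.Xω⁻¹ : A.Hˣ) : A.H) * (A.T0 : A.H)
    = algebraMap A.K A.H A.qi * (((A.T0⁻¹ : A.Hˣ) : A.H) * (A.Xω : A.H)) := by
  simp only [qi]
  have hu : A.Xω⁻¹ * A.T0 = A.T0⁻¹ * (A.T0 * A.Xω⁻¹ * A.T0) := by group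
  calc ((A.Xω⁻¹ : A.Hˣ) : A.H) * (A.T0 : A.H)
      = ((A.Xω⁻¹ * A.T0 : A.Hˣ) : A.H) := by rw [Units.val_mul]
    _ = ((A.T0⁻¹ : A.Hˣ) : A.H) * ((A.T0 * A.Xω⁻¹ * A.T0 : A.Hˣ) : A.H) := by
        rw [hu, Units.val_mul]
    _ = ((A.T0⁻¹ : A.Hˣ) : A.H) *
          (algebraMap A.K A.H ((((A.qsq * A.qsq)⁻¹ : A.Kˣ)) : A.K) * (A.Xω : A.H)) := by
        rw [A.rel_T0X]
    _ = _ := by rw [A.cmove]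

lemma XXT0 : ((A.Xω⁻¹ : A.Hˣ) : A.H) * (((A.Xω⁻¹ : A.Hˣ) : A.H) * (A.T0 : A.H))
    = algebraMap A.K A.H (A.qi * A.qi) *
        (((A.T0⁻¹ : A.Hˣ) : A.H) * (A.Xω : A.H) * (A.Xω : A.H))
      - algebraMap A.K A.H (A.aa * A.qi) := by
  have hXiT0i : ((A.Xω⁻¹ : A.Hˣ) : A.H) * ((A.T0⁻¹ : A.Hˣ) : A.H)
      = algebraMap A.K A.H A.qi * (((A.T0⁻¹ : A.Hˣ) : A.H) * (A.Xω : A.H))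
        - algebraMap A.K A.H A.aa * ((A.Xω⁻¹ : A.Hˣ) : A.H) := by
    calc ((A.Xω⁻¹ : A.Hˣ) : A.H) * ((A.T0⁻¹ : A.Hˣ) : A.H)
        = ((A.Xω⁻¹ : A.Hˣ) : A.H) * ((A.T0 : A.H) - algebraMap A.K A.H A.aa) := by
          rw [A.T0inv]
      _ = ((A.Xω⁻¹ : A.Hˣ) : A.H) * (A.T0 : A.H)
            - ((A.Xω⁻¹ : A.Hˣ) : A.H) * algebraMap A.K A.H A.aa := by rw [mul_sub]
      _ = _ := by rw [A.XT0, ← Algebra.commutes]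
  calc ((A.Xω⁻¹ : A.Hˣ) : A.H) * (((A.Xω⁻¹ : A.Hˣ) : A.H) * (A.T0 : A.H))
      = ((A.Xω⁻¹ : A.Hˣ) : A.H)
          * (algebraMap A.K A.H A.qi * (((A.T0⁻¹ : A.Hˣ) : A.H) * (A.Xω : A.H))) := by
        rw [A.XT0]
    _ = algebraMap A.K A.H A.qi
          * (((A.Xω⁻¹ : A.Hˣ) : A.H) * ((A.T0⁻¹ : A.Hˣ) : A.H) * (A.Xω : A.H)) := by
        rw [A.cmove, mul_assoc]
    _ = algebraMap A.K A.H A.qi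
          * ((algebraMap A.K A.H A.qi * (((A.T0⁻¹ : A.Hˣ) : A.H) * (A.Xω : A.H))
              - algebraMap A.K A.H A.aa * ((A.Xω⁻¹ : A.Hˣ) : A.H)) * (A.Xω : A.H)) := by
        rw [hXiT0i]
    _ = algebraMap A.K A.H A.qi
          * (algebraMap A.K A.H A.qi * (((A.T0⁻¹ : A.Hˣ) : A.H) * (A.Xω : A.H) * (A.Xω : A.H))
             - algebraMap A.K A.H A.aa * (((A.Xω⁻¹ : A.Hˣ) : A.H) * (A.Xω : A.H))) := by
        rw [sub_mul, mul_assoc, mul_assoc, mul_assoc]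
    _ = algebraMap A.K A.H A.qi
          * (algebraMap A.K A.H A.qi * (((A.T0⁻¹ : A.Hˣ) : A.H) * (A.Xω : A.H) * (A.Xω : A.H))
             - algebraMap A.K A.H A.aa * 1) := by
        rw [A.Xω.inv_mul]
    _ = _ := by
        rw [mul_sub, A.ccol, A.ccol, mul_one, mul_comm A.qi A.qi, mul_comm A.qi A.aa]

lemma WinvY : ((A.W⁻¹ : A.Hˣ) : A.H) * ((A.Yα : A.Hˣ) : A.H)
    = algebraMap A.K A.H (A.qi * A.qi)
        * (((A.Yα⁻¹ : A.Hˣ) : A.H) * ((A.W : A.Hˣ) : A.H))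
      - algebraMap A.K A.H (A.aa * A.qi) := by
  have hu : A.W⁻¹ = A.T1⁻¹ * A.Xω⁻¹ * A.Xω⁻¹ := by rw [W]; group
  have hu2 : A.Yα⁻¹ * A.W = A.T1⁻¹ * A.T0⁻¹ * A.Xω * A.Xω * A.T1 := by
    rw [A.Y_eq, W]; group
  have hu' : ((A.W⁻¹ : A.Hˣ) : A.H)
      = ((A.T1⁻¹ : A.Hˣ) : A.H) * ((A.Xω⁻¹ : A.Hˣ) : A.H) * ((A.Xω⁻¹ : A.Hˣ) : A.H) := by
    rw [hu]; push_cast; noncomm_ring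
  have hY' : ((A.Yα : A.Hˣ) : A.H) = (A.T0 : A.H) * (A.T1 : A.H) := by
    rw [A.Y_eq]; push_cast; noncomm_ring
  have hu2' : ((A.Yα⁻¹ : A.Hˣ) : A.H) * ((A.W : A.Hˣ) : A.H)
      = ((A.T1⁻¹ : A.Hˣ) : A.H) * ((A.T0⁻¹ : A.Hˣ) : A.H) * (A.Xω : A.H) * (A.Xω : A.H)
        * (A.T1 : A.H) := by
    rw [← Units.val_mul, hu2]; push_cast; noncomm_ring
  rw [hu', hY']
  calc ((A.T1⁻¹ : A.Hˣ) : A.H) * ((A.Xω⁻¹ : A.Hˣ) : A.H) * ((A.Xω⁻¹ : A.Hˣ) : A.H)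
        * ((A.T0 : A.H) * (A.T1 : A.H))
      = ((A.T1⁻¹ : A.Hˣ) : A.H)
          * (((A.Xω⁻¹ : A.Hˣ) : A.H) * (((A.Xω⁻¹ : A.Hˣ) : A.H) * (A.T0 : A.H))
             * (A.T1 : A.H)) := by
        noncomm_ring
    _ = ((A.T1⁻¹ : A.Hˣ) : A.H)
          * ((algebraMap A.K A.H (A.qi * A.qi) *
                (((A.T0⁻¹ : A.Hˣ) : A.H) * (A.Xω : A.H) * (A.Xω : A.H))
              - algebraMap A.K A.H (A.aa * A.qi)) * (A.T1 : A.H)) := by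
        rw [A.XXT0]
    _ = algebraMap A.K A.H (A.qi * A.qi)
          * (((A.T1⁻¹ : A.Hˣ) : A.H) * ((A.T0⁻¹ : A.Hˣ) : A.H) * (A.Xω : A.H) * (A.Xω : A.H)
             * (A.T1 : A.H))
        - algebraMap A.K A.H (A.aa * A.qi)
          * (((A.T1⁻¹ : A.Hˣ) : A.H) * (A.T1 : A.H)) := by
        rw [sub_mul, mul_sub, mul_assoc (algebraMap A.K A.H (A.qi * A.qi)), A.cmove, A.cmove]
        noncomm_ring
    _ = _ := by
        rw [A.T1.inv_mul, mul_one, ← hu2']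


lemma commute_rinv {R : Type} [Ring R] {x u : R} (h : IsUnit u) (hc : Commute x u) :
    Commute x (Ring.inverse u) := by
  obtain ⟨v, rfl⟩ := h
  rw [Ring.inverse_unit]
  exact hc.units_inv_right

lemma cY0 : Commute ((A.Yα : A.Hˣ) : A.H) (1 - A.Yma0) := by
  simp only [Yma0]
  exact (Commute.one_right _).sub_right
    ((Algebra.commute_algebraMap_right A.q _).mul_right (Commute.refl _))

lemma cY2 : Commute ((A.Yα : A.Hˣ) : A.H) (1 - A.Yms0a1) := by
  simp only [Yms0a1]
  exact (Commute.one_right _).sub_right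
    ((Algebra.commute_algebraMap_right (A.q ^ 2) _).mul_right (Commute.refl _))

lemma c00 : Commute ((1 : A.H) - A.Yma0) (1 - A.Yms0a1) := by
  simp only [Yma0, Yms0a1]
  exact (Commute.one_right _).sub_right
    ((Commute.one_left _).sub_left
      ((Algebra.commute_algebraMap_left A.q _).mul_left
        ((Algebra.commute_algebraMap_right (A.q ^ 2) _).mul_right (Commute.refl _))))


lemma F0eq (h0 : IsUnit ((1 : A.H) - A.Yma0)) :
    Ring.inverse (1 - A.Yma0)
      = 1 + algebraMap A.K A.H A.q * (Ring.inverse (1 - A.Yma0) * ((A.Yα : A.Hˣ) : A.H)) := by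
  have h' : Ring.inverse (1 - A.Yma0) * (1 - A.Yma0) = 1 := Ring.inverse_mul_cancel _ h0
  have h2 : Ring.inverse (1 - A.Yma0) * (1 - A.Yma0)
      = Ring.inverse (1 - A.Yma0)
        - algebraMap A.K A.H A.q * (Ring.inverse (1 - A.Yma0) * ((A.Yα : A.Hˣ) : A.H)) := by
    simp only [Yma0]
    rw [mul_sub, mul_one, A.cmove]
  rw [h2] at h'
  exact eq_add_of_sub_eq h'

lemma scalar_q2qi2 : A.q ^ 2 * (A.qi * A.qi) = 1 := by
  have hs := A.scalar_qqi
  linear_combination (A.q * A.qi + 1) * hs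

lemma scalar_q2aaqi : A.q ^ 2 * (A.aa * A.qi) = A.aa * A.q := by
  have hs := A.scalar_qqi
  linear_combination A.aa * A.q * hs

lemma key' (h0 : IsUnit ((1 : A.H) - A.Yma0)) :
    algebraMap A.K A.H (A.q ^ 2) * (A.tau0 * ((A.Yα : A.Hˣ) : A.H))
      = ((A.Yα⁻¹ : A.Hˣ) : A.H) * A.tau0 := by
  set F0 := Ring.inverse (1 - A.Yma0) with hF0def
  have hF0eq : F0 = 1 + algebraMap A.K A.H A.q * (F0 * ((A.Yα : A.Hˣ) : A.H)) := by
    rw [hF0def]; exact A.F0eq h0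
  have e1 : algebraMap A.K A.H (A.q ^ 2) * (((A.W⁻¹ : A.Hˣ) : A.H) * ((A.Yα : A.Hˣ) : A.H))
      = ((A.Yα⁻¹ : A.Hˣ) : A.H) * ((A.W : A.Hˣ) : A.H) - algebraMap A.K A.H (A.aa * A.q) := by
    rw [A.WinvY, mul_sub, A.ccol, A.scalar_q2qi2, map_one, one_mul, ← map_mul,
      A.scalar_q2aaqi]
  have eL : algebraMap A.K A.H (A.q ^ 2) * (A.tau0 * ((A.Yα : A.Hˣ) : A.H))
      = ((A.Yα⁻¹ : A.Hˣ) : A.H) * ((A.W : A.Hˣ) : A.H) - algebraMap A.K A.H (A.aa * A.q)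
        + algebraMap A.K A.H (A.q ^ 2 * A.tfac) * (F0 * ((A.Yα : A.Hˣ) : A.H)) := by
    calc algebraMap A.K A.H (A.q ^ 2) * (A.tau0 * ((A.Yα : A.Hˣ) : A.H))
        = algebraMap A.K A.H (A.q ^ 2) * (((A.W⁻¹ : A.Hˣ) : A.H) * ((A.Yα : A.Hˣ) : A.H))
          + algebraMap A.K A.H (A.q ^ 2) *
              (algebraMap A.K A.H A.tfac * (F0 * ((A.Yα : A.Hˣ) : A.H))) := by
          simp only [tau0, A.T0v_eq, ← hF0def]
          rw [add_mul, mul_add, mul_assoc (algebraMap A.K A.H A.tfac)]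
      _ = _ := by rw [e1, A.ccol]
  have eR : ((A.Yα⁻¹ : A.Hˣ) : A.H) * A.tau0
      = ((A.Yα⁻¹ : A.Hˣ) : A.H) * ((A.W : A.Hˣ) : A.H)
        + algebraMap A.K A.H A.aa * ((A.Yα⁻¹ : A.Hˣ) : A.H)
        + algebraMap A.K A.H A.tfac * (((A.Yα⁻¹ : A.Hˣ) : A.H) * F0) := by
    simp only [tau0, A.T0v_eq, ← hF0def]
    rw [mul_add, A.Winv, mul_add, ← Algebra.commutes A.aa, A.cmove]
  rw [eL, eR]
  have cF0 : Commute ((A.Yα : A.Hˣ) : A.H) F0 := commute_rinv h0 A.cY0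
  have cF0' : Commute ((A.Yα⁻¹ : A.Hˣ) : A.H) F0 := cF0.units_inv_left
  have hF0m1 : F0 - 1 = algebraMap A.K A.H A.q * (F0 * ((A.Yα : A.Hˣ) : A.H)) := by
    conv_lhs => rw [hF0eq]
    exact add_sub_cancel_left 1 _
  have sA : A.q ^ 2 * A.tfac = -(A.aa * A.q * A.q) := by rw [A.scalar_tfac]; ring
  have sB : A.aa * A.q = -(A.tfac * A.q) := by rw [A.scalar_tfac]; ring
  have sC : A.aa = -A.tfac := by rw [A.scalar_tfac]; ring
  have hmain : - algebraMap A.K A.H (A.aa * A.q)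
        + algebraMap A.K A.H (A.q ^ 2 * A.tfac) * (F0 * ((A.Yα : A.Hˣ) : A.H))
      = algebraMap A.K A.H A.aa * ((A.Yα⁻¹ : A.Hˣ) : A.H)
        + algebraMap A.K A.H A.tfac * (((A.Yα⁻¹ : A.Hˣ) : A.H) * F0) := by
    have hthis : algebraMap A.K A.H (A.aa * A.q) * F0
        = algebraMap A.K A.H (A.aa * A.q)
          + algebraMap A.K A.H (A.aa * A.q * A.q) * (F0 * ((A.Yα : A.Hˣ) : A.H)) := by
      conv_lhs => rw [hF0eq]
      rw [mul_add, mul_one, A.ccol]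
    have lhs_eq : - algebraMap A.K A.H (A.aa * A.q)
          + algebraMap A.K A.H (A.q ^ 2 * A.tfac) * (F0 * ((A.Yα : A.Hˣ) : A.H))
        = - (algebraMap A.K A.H (A.aa * A.q) * F0) := by
      rw [hthis, sA, map_neg, neg_mul]
      abel
    have rhs_eq : algebraMap A.K A.H A.aa * ((A.Yα⁻¹ : A.Hˣ) : A.H)
          + algebraMap A.K A.H A.tfac * (((A.Yα⁻¹ : A.Hˣ) : A.H) * F0)
        = - (algebraMap A.K A.H (A.aa * A.q) * F0) := by
      have h1' : ((A.Yα⁻¹ : A.Hˣ) : A.H) * F0 = F0 * ((A.Yα⁻¹ : A.Hˣ) : A.H) := cF0'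
      calc algebraMap A.K A.H A.aa * ((A.Yα⁻¹ : A.Hˣ) : A.H)
            + algebraMap A.K A.H A.tfac * (((A.Yα⁻¹ : A.Hˣ) : A.H) * F0)
          = - (algebraMap A.K A.H A.tfac * ((A.Yα⁻¹ : A.Hˣ) : A.H))
            + algebraMap A.K A.H A.tfac * (F0 * ((A.Yα⁻¹ : A.Hˣ) : A.H)) := by
            rw [h1', sC, map_neg, neg_mul]
        _ = algebraMap A.K A.H A.tfac * ((F0 - 1) * ((A.Yα⁻¹ : A.Hˣ) : A.H)) := by
            rw [sub_mul, one_mul, mul_sub]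
            abel
        _ = algebraMap A.K A.H A.tfac
              * (algebraMap A.K A.H A.q * (F0 * (((A.Yα : A.Hˣ) : A.H) * ((A.Yα⁻¹ : A.Hˣ) : A.H)))) := by
            rw [hF0m1, mul_assoc, mul_assoc]
        _ = algebraMap A.K A.H A.tfac * (algebraMap A.K A.H A.q * F0) := by
            rw [A.Yα.mul_inv, mul_one]
        _ = algebraMap A.K A.H (A.tfac * A.q) * F0 := by rw [A.ccol]
        _ = _ := by rw [sB, map_neg, neg_mul, neg_neg]
    rw [lhs_eq, rhs_eq]
  calc ((A.Yα⁻¹ : A.Hˣ) : A.H) * ((A.W : A.Hˣ) : A.H) - algebraMap A.K A.H (A.aa * A.q)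
        + algebraMap A.K A.H (A.q ^ 2 * A.tfac) * (F0 * ((A.Yα : A.Hˣ) : A.H))
      = ((A.Yα⁻¹ : A.Hˣ) : A.H) * ((A.W : A.Hˣ) : A.H)
        + (- algebraMap A.K A.H (A.aa * A.q)
           + algebraMap A.K A.H (A.q ^ 2 * A.tfac) * (F0 * ((A.Yα : A.Hˣ) : A.H))) := by
        abel
    _ = _ := by rw [hmain]; abel


lemma key (h0 : IsUnit ((1 : A.H) - A.Yma0)) :
    A.tau0 * (1 - A.Yms0a1) = (1 - ((A.Yα⁻¹ : A.Hˣ) : A.H)) * A.tau0 := by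
  have h : A.tau0 * A.Yms0a1 = ((A.Yα⁻¹ : A.Hˣ) : A.H) * A.tau0 := by
    simp only [Yms0a1]
    rw [A.cmove, A.key' h0]
  rw [mul_sub, sub_mul, mul_one, one_mul, h]

lemma key2 (h1 : IsUnit ((1 : A.H) - ((A.Yα⁻¹ : A.Hˣ) : A.H)))
    (h0 : IsUnit ((1 : A.H) - A.Yma0)) (h2 : IsUnit ((1 : A.H) - A.Yms0a1)) :
    Ring.inverse (1 - ((A.Yα⁻¹ : A.Hˣ) : A.H)) * A.tau0
      = A.tau0 * Ring.inverse (1 - A.Yms0a1) := by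
  calc Ring.inverse (1 - ((A.Yα⁻¹ : A.Hˣ) : A.H)) * A.tau0
      = Ring.inverse (1 - ((A.Yα⁻¹ : A.Hˣ) : A.H)) *
          (A.tau0 * ((1 - A.Yms0a1) * Ring.inverse (1 - A.Yms0a1))) := by
        rw [Ring.mul_inverse_cancel _ h2, mul_one]
    _ = Ring.inverse (1 - ((A.Yα⁻¹ : A.Hˣ) : A.H)) *
          ((A.tau0 * (1 - A.Yms0a1)) * Ring.inverse (1 - A.Yms0a1)) := by
        rw [mul_assoc]
    _ = Ring.inverse (1 - ((A.Yα⁻¹ : A.Hˣ) : A.H)) *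
          (((1 - ((A.Yα⁻¹ : A.Hˣ) : A.H)) * A.tau0) * Ring.inverse (1 - A.Yms0a1)) := by
        rw [A.key h0]
    _ = (Ring.inverse (1 - ((A.Yα⁻¹ : A.Hˣ) : A.H)) * (1 - ((A.Yα⁻¹ : A.Hˣ) : A.H))) *
          (A.tau0 * Ring.inverse (1 - A.Yms0a1)) := by
        rw [← mul_assoc, ← mul_assoc, mul_assoc _ A.tau0]
    _ = _ := by rw [Ring.inverse_mul_cancel _ h1, one_mul]

end A1DAHA

/-- the alcove walk expansion of `τ₁^∨τ₀^∨` in the type `A₁` double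
affine Hecke algebra, corresponding to the reduced word `X^{-2ω} = s₁^∨s₀^∨`. -/
theorem statement12 (A : A1DAHA)
    (h1 : IsUnit ((1 : A.H) - ((A.Yα⁻¹ : A.Hˣ) : A.H)))
    (h0 : IsUnit ((1 : A.H) - A.Yma0))
    (h2 : IsUnit ((1 : A.H) - A.Yms0a1)) :
    A.tau1 * A.tau0 =
      (((A.Xω * A.Xω)⁻¹ : A.Hˣ) : A.H)
      + (A.T1 : A.H) * (algebraMap A.K A.H A.tfac * Ring.inverse (1 - A.Yma0))
      + ((A.Xω * A.Xω : A.Hˣ) : A.H) * (A.T1 : A.H) *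
          (algebraMap A.K A.H A.tfac * Ring.inverse (1 - A.Yms0a1))
      + (algebraMap A.K A.H A.tfac * Ring.inverse (1 - A.Yms0a1)) *
          (algebraMap A.K A.H A.tfac * A.Yma0 * Ring.inverse (1 - A.Yma0)) := by
  set F0 := Ring.inverse (1 - A.Yma0) with hF0def
  set F1 := Ring.inverse (1 - ((A.Yα⁻¹ : A.Hˣ) : A.H)) with hF1def
  set F2 := Ring.inverse (1 - A.Yms0a1) with hF2def
  have cF0 : Commute ((A.Yα : A.Hˣ) : A.H) F0 := A1DAHA.commute_rinv h0 A.cY0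
  have cF2 : Commute ((A.Yα : A.Hˣ) : A.H) F2 := A1DAHA.commute_rinv h2 A.cY2
  have c02 : Commute F0 F2 :=
    A1DAHA.commute_rinv h2 ((A1DAHA.commute_rinv h0 (A.c00).symm).symm)
  have hF0eq : F0 = 1 + algebraMap A.K A.H A.q * (F0 * ((A.Yα : A.Hˣ) : A.H)) := by
    rw [hF0def]; exact A.F0eq h0
  have hF0m1 : F0 - 1 = algebraMap A.K A.H A.q * (F0 * ((A.Yα : A.Hˣ) : A.H)) := by
    conv_lhs => rw [hF0eq]
    exact add_sub_cancel_left 1 _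
  have hT1W : (A.T1 : A.H) * ((A.W⁻¹ : A.Hˣ) : A.H) = (((A.Xω * A.Xω)⁻¹ : A.Hˣ) : A.H) := by
    rw [← Units.val_mul]
    congr 1
    rw [A1DAHA.W]
    group
  have hWcoe : ((A.Xω * A.Xω : A.Hˣ) : A.H) * (A.T1 : A.H) = ((A.W : A.Hˣ) : A.H) := by
    rw [← Units.val_mul, A1DAHA.W]
  -- third term
  have p3 : algebraMap A.K A.H A.tfac * (((A.W⁻¹ : A.Hˣ) : A.H) * F2)
      = ((A.Xω * A.Xω : A.Hˣ) : A.H) * (A.T1 : A.H) * (algebraMap A.K A.H A.tfac * F2)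
        + algebraMap A.K A.H (A.tfac * A.aa) * F2 := by
    have hW3 : ((A.Xω * A.Xω : A.Hˣ) : A.H) * (A.T1 : A.H) * (algebraMap A.K A.H A.tfac * F2)
        = algebraMap A.K A.H A.tfac * (((A.W : A.Hˣ) : A.H) * F2) := by
      rw [hWcoe, A.cmove]
    rw [A.Winv, add_mul, mul_add, A.ccol, hW3]
  -- fourth term
  have p4 : algebraMap A.K A.H (A.tfac * A.aa) * F2
        + algebraMap A.K A.H A.tfac * ((algebraMap A.K A.H A.tfac * F0) * F2)
      = (algebraMap A.K A.H A.tfac * F2) *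
          (algebraMap A.K A.H A.tfac * A.Yma0 * F0) := by
    have sD : A.tfac * A.aa = -(A.tfac * A.tfac) := by rw [A.scalar_tfac]; ring
    have cc : F0 * (((A.Yα : A.Hˣ) : A.H) * F2) = F2 * (((A.Yα : A.Hˣ) : A.H) * F0) := by
      calc F0 * (((A.Yα : A.Hˣ) : A.H) * F2) = F0 * (F2 * ((A.Yα : A.Hˣ) : A.H)) := by
            rw [cF2.eq]
        _ = (F0 * F2) * ((A.Yα : A.Hˣ) : A.H) := by rw [mul_assoc]
        _ = (F2 * F0) * ((A.Yα : A.Hˣ) : A.H) := by rw [c02.eq]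
        _ = F2 * (F0 * ((A.Yα : A.Hˣ) : A.H)) := by rw [mul_assoc]
        _ = _ := by rw [← cF0.eq]
    have lhs_eq : algebraMap A.K A.H (A.tfac * A.aa) * F2
          + algebraMap A.K A.H A.tfac * ((algebraMap A.K A.H A.tfac * F0) * F2)
        = algebraMap A.K A.H (A.tfac * A.tfac * A.q)
            * (F0 * (((A.Yα : A.Hˣ) : A.H) * F2)) := by
      calc algebraMap A.K A.H (A.tfac * A.aa) * F2
            + algebraMap A.K A.H A.tfac * ((algebraMap A.K A.H A.tfac * F0) * F2)
          = - (algebraMap A.K A.H (A.tfac * A.tfac) * F2)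
            + algebraMap A.K A.H (A.tfac * A.tfac) * (F0 * F2) := by
            rw [sD, map_neg, neg_mul, mul_assoc (algebraMap A.K A.H A.tfac), A.ccol]
        _ = algebraMap A.K A.H (A.tfac * A.tfac) * ((F0 - 1) * F2) := by
            rw [sub_mul, one_mul, mul_sub]
            abel
        _ = algebraMap A.K A.H (A.tfac * A.tfac)
              * (algebraMap A.K A.H A.q * ((F0 * ((A.Yα : A.Hˣ) : A.H)) * F2)) := by
            rw [hF0m1, mul_assoc]
        _ = _ := by rw [A.ccol, mul_assoc, mul_assoc F0]
    have rhs_eq : (algebraMap A.K A.H A.tfac * F2) *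
          (algebraMap A.K A.H A.tfac * A.Yma0 * F0)
        = algebraMap A.K A.H (A.tfac * A.tfac * A.q)
            * (F2 * (((A.Yα : A.Hˣ) : A.H) * F0)) := by
      simp only [A1DAHA.Yma0]
      calc (algebraMap A.K A.H A.tfac * F2) *
            (algebraMap A.K A.H A.tfac * (algebraMap A.K A.H A.q * ((A.Yα : A.Hˣ) : A.H)) * F0)
          = algebraMap A.K A.H A.tfac *
              (F2 * (algebraMap A.K A.H A.tfac *
                (algebraMap A.K A.H A.q * (((A.Yα : A.Hˣ) : A.H) * F0)))) := by
            rw [mul_assoc (algebraMap A.K A.H A.tfac) F2, mul_assoc, mul_assoc]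
        _ = algebraMap A.K A.H A.tfac *
              (algebraMap A.K A.H A.tfac *
                (algebraMap A.K A.H A.q * (F2 * (((A.Yα : A.Hˣ) : A.H) * F0)))) := by
            rw [A.cmove A.tfac F2, A.cmove A.q F2]
        _ = _ := by rw [A.ccol, A.ccol]
    rw [lhs_eq, rhs_eq, cc]
  -- main assembly
  calc A.tau1 * A.tau0
      = (A.T1 : A.H) * A.tau0 + algebraMap A.K A.H A.tfac * (F1 * A.tau0) := by
        simp only [A1DAHA.tau1, ← hF1def]
        rw [add_mul, mul_assoc]
    _ = (A.T1 : A.H) * (((A.W⁻¹ : A.Hˣ) : A.H) + algebraMap A.K A.H A.tfac * F0)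
        + algebraMap A.K A.H A.tfac *
            ((((A.W⁻¹ : A.Hˣ) : A.H) + algebraMap A.K A.H A.tfac * F0) * F2) := by
        rw [A.key2 h1 h0 h2]
        simp only [A1DAHA.tau0, A.T0v_eq, ← hF0def, ← hF2def]
    _ = (A.T1 : A.H) * ((A.W⁻¹ : A.Hˣ) : A.H)
        + (A.T1 : A.H) * (algebraMap A.K A.H A.tfac * F0)
        + (algebraMap A.K A.H A.tfac * (((A.W⁻¹ : A.Hˣ) : A.H) * F2)
           + algebraMap A.K A.H A.tfac * ((algebraMap A.K A.H A.tfac * F0) * F2)) := by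
        rw [mul_add, add_mul, mul_add]
    _ = (((A.Xω * A.Xω)⁻¹ : A.Hˣ) : A.H)
        + (A.T1 : A.H) * (algebraMap A.K A.H A.tfac * F0)
        + (((A.Xω * A.Xω : A.Hˣ) : A.H) * (A.T1 : A.H) * (algebraMap A.K A.H A.tfac * F2)
           + (algebraMap A.K A.H (A.tfac * A.aa) * F2
              + algebraMap A.K A.H A.tfac * ((algebraMap A.K A.H A.tfac * F0) * F2))) := by
        rw [hT1W, p3]
        abel
    _ = _ := by
        rw [p4]
        abel

end
end

section
/- In the polynomial representation of the type A_1 double affine Hecke algebra, the symmetric Macdonald polynomial P_{2ω} = 1_0 E_{2ω} = (T_1^∨ + t^{-1/2}) τ_0^∨ · 1 equals ( X^{2ω} + X^{−2ω} + (1+q)(1−t)/(1−qt) ) · 1. -/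
noncomputable section

/-!
In the polynomial representation of the type `A₁` double affine Hecke algebra, the
symmetric Macdonald polynomial `P_{2ω} = 𝟙₀E_{2ω} = (T₁^∨ + t^{-1/2})τ₀^∨·𝟙` equals
`( X^{2ω} + X^{-2ω} + (1+q)(1−t)/(1−qt) )·𝟙`.
-/

/-- The type `A₁` double affine Hecke algebra together with its polynomial
representation `C[X] = Ind_H^{H̃}(𝟙)`, where `Tᵢ·𝟙 = t^{1/2}·𝟙` and `g·𝟙 = 𝟙`. -/
structure A1DAHARep where
  K : Type
  [commRingK : CommRing K]
  /-- `q^{1/2}` -/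
  qsq : Kˣ
  /-- `t^{1/2}` -/
  tsq : Kˣ
  H : Type
  [ringH : Ring H]
  [algH : Algebra K H]
  T0 : Hˣ
  T1 : Hˣ
  g : Hˣ
  Xω : Hˣ
  rel_T0 : T0 = g * T1 * g⁻¹
  rel_g : g * g = 1
  rel_gX : ((g * Xω : Hˣ) : H) = algebraMap K H (qsq : K) * ((Xω⁻¹ * g : Hˣ) : H)
  rel_T1X : T1 * Xω * T1 = Xω⁻¹
  rel_T0X : ((T0 * Xω⁻¹ * T0 : Hˣ) : H)
      = algebraMap K H ((((qsq * qsq)⁻¹ : Kˣ)) : K) * ((Xω : Hˣ) : H)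
  quad0 : ((T0 : H)) ^ 2
      = algebraMap K H ((tsq : K) - ((tsq⁻¹ : Kˣ) : K)) * (T0 : H) + 1
  quad1 : ((T1 : H)) ^ 2
      = algebraMap K H ((tsq : K) - ((tsq⁻¹ : Kˣ) : K)) * (T1 : H) + 1
  /-- the polynomial representation -/
  M : Type
  [acgM : AddCommGroup M]
  [modM : Module H M]
  /-- the cyclic vector `𝟙` -/
  one : M
  cyclic : ∀ m : M, ∃ h : H, h • one = m
  T0_one : (T0 : H) • one = algebraMap K H (tsq : K) • one
  T1_one : (T1 : H) • one = algebraMap K H (tsq : K) • one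
  g_one : (g : H) • one = one

attribute [instance] A1DAHARep.commRingK A1DAHARep.ringH A1DAHARep.algH
  A1DAHARep.acgM A1DAHARep.modM

namespace A1DAHARep

variable (A : A1DAHARep)

/-- `q = (q^{1/2})²`. -/
def q : A.K := (A.qsq : A.K) ^ 2

/-- `t = (t^{1/2})²`. -/
def t : A.K := (A.tsq : A.K) ^ 2

/-- `Y^{α^∨} = Y^{2ω^∨} = (gT₁)²`, since `Y^{ω^∨} = gT₁`. -/
def Yα : A.Hˣ := (A.g * A.T1) * (A.g * A.T1)

/-- `Y^{-α₀^∨} = qY^{α^∨}`. -/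
def Yma0 : A.H := algebraMap A.K A.H A.q * (A.Yα : A.H)

/-- `Y^{-s₀α₁^∨} = Y^{α^∨+2d} = q²Y^{α^∨}`. -/
def Yms0a1 : A.H := algebraMap A.K A.H (A.q ^ 2) * (A.Yα : A.H)

/-- The scalar `t^{-1/2}(1−t)`. -/
def tfac : A.K := ((A.tsq⁻¹ : A.Kˣ) : A.K) * (1 - A.t)

/-- `(T₀^∨)⁻¹ = X^φT₁ = X^{2ω}T₁`, so `T₀^∨ = (X^{2ω}T₁)⁻¹`. -/
def T0v : A.Hˣ := (A.Xω * A.Xω * A.T1)⁻¹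

/-- The intertwiner `τ₁^∨ = T₁^∨ + t^{-1/2}(1−t)/(1−Y^{-α₁^∨})`. -/
def tau1 : A.H :=
  (A.T1 : A.H) + algebraMap A.K A.H A.tfac * Ring.inverse (1 - ((A.Yα⁻¹ : A.Hˣ) : A.H))

/-- The intertwiner `τ₀^∨ = T₀^∨ + t^{-1/2}(1−t)/(1−Y^{-α₀^∨})`. -/
def tau0 : A.H :=
  (A.T0v : A.H) + algebraMap A.K A.H A.tfac * Ring.inverse (1 - A.Yma0)

end A1DAHARep


namespace A1DAHAAux

variable (A : A1DAHARep)

lemma scomm (k : A.K) (h : A.H) (m : A.M) :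
    h • ((algebraMap A.K A.H k) • m) = (algebraMap A.K A.H k) • (h • m) := by
  rw [← mul_smul, ← Algebra.commutes, mul_smul]

lemma sc_sc (k k' : A.K) (m : A.M) :
    (algebraMap A.K A.H k) • ((algebraMap A.K A.H k') • m)
      = (algebraMap A.K A.H (k * k')) • m := by
  rw [← mul_smul, ← map_mul]

end A1DAHAAux

/-- in the polynomial representation of the type `A₁` double affine Hecke
algebra, the symmetric Macdonald polynomial
`P_{2ω} = 𝟙₀E_{2ω} = (T₁^∨ + t^{-1/2})τ₀^∨·𝟙` equals
`( X^{2ω} + X^{-2ω} + (1+q)(1−t)/(1−qt) )·𝟙`, where `𝟙₀ = T₁ + t^{-1/2}` and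
`E_{2ω} = τ₀^∨·𝟙` since `X^{2ω} = s₀^∨` is minimal in `X^{2ω}W₀`. -/

theorem statement14 (A : A1DAHARep)
    (h0 : IsUnit ((1 : A.H) - A.Yma0))
    (hqt : IsUnit ((1 : A.K) - A.q * A.t)) :
    (((A.T1 : A.H) + algebraMap A.K A.H ((A.tsq⁻¹ : A.Kˣ) : A.K)) * A.tau0) • A.one =
      (((A.Xω * A.Xω : A.Hˣ) : A.H) + (((A.Xω * A.Xω)⁻¹ : A.Hˣ) : A.H)
        + algebraMap A.K A.H ((1 + A.q) * (1 - A.t) * Ring.inverse (1 - A.q * A.t)))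
        • A.one := by
  classical
  set e := A.one with he
  set ts : A.K := (A.tsq : A.K) with hts
  set tsi : A.K := ((A.tsq⁻¹ : A.Kˣ) : A.K) with htsi
  set X : A.H := (A.Xω : A.H) with hX
  set Xi : A.H := ((A.Xω⁻¹ : A.Hˣ) : A.H) with hXi
  set T : A.H := (A.T1 : A.H) with hT
  set r : A.K := Ring.inverse ((1 : A.K) - A.q * A.t) with hrdef
  have hst : ts * tsi = 1 := A.tsq.mul_inv
  have hr : r * ((1 : A.K) - A.q * A.t) = 1 := Ring.inverse_mul_cancel _ hqt
  have hq1 : T * T = (algebraMap A.K A.H) (ts - tsi) * T + 1 := by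
    have h := A.quad1; rwa [sq] at h
  have hTT : T * ((A.T1⁻¹ : A.Hˣ) : A.H) = 1 := A.T1.mul_inv
  have hT1inv : ((A.T1⁻¹ : A.Hˣ) : A.H) = T - (algebraMap A.K A.H) (ts - tsi) := by
    refine Units.inv_eq_of_mul_eq_one_right ?_
    rw [mul_sub, hq1, ← Algebra.commutes]
    noncomm_ring
  have hXXinv : X * Xi = 1 := A.Xω.mul_inv
  have hrel : T * X * T = Xi := by
    have h := congrArg (Units.val) A.rel_T1X
    simpa using h
  have hTXinv : T * Xi = (algebraMap A.K A.H) (ts - tsi) * Xi + X * T := by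
    rw [← hrel, show T * (T * X * T) = (T * T) * X * T by noncomm_ring, hq1]
    noncomm_ring
  have hcomm : ∀ (a : A.K) (x y : A.H), x * ((algebraMap A.K A.H) a * y) = (algebraMap A.K A.H) a * (x * y) := by
    intro a x y
    rw [← mul_assoc, ← Algebra.commutes, mul_assoc]
  have hTXX : T * (Xi * Xi) = (algebraMap A.K A.H) (ts - tsi) * (Xi * Xi) + (algebraMap A.K A.H) (ts - tsi) + X * X * T := by
    calc T * (Xi * Xi) = (T * Xi) * Xi := by noncomm_ring
      _ = ((algebraMap A.K A.H) (ts - tsi) * Xi + X * T) * Xi := by rw [hTXinv]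
      _ = (algebraMap A.K A.H) (ts - tsi) * (Xi * Xi) + X * (T * Xi) := by noncomm_ring
      _ = (algebraMap A.K A.H) (ts - tsi) * (Xi * Xi) + X * ((algebraMap A.K A.H) (ts - tsi) * Xi + X * T) := by rw [hTXinv]
      _ = (algebraMap A.K A.H) (ts - tsi) * (Xi * Xi) + (X * ((algebraMap A.K A.H) (ts - tsi) * Xi) + X * (X * T)) := by
          rw [mul_add]
      _ = (algebraMap A.K A.H) (ts - tsi) * (Xi * Xi) + ((algebraMap A.K A.H) (ts - tsi) * (X * Xi) + X * (X * T)) := by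
          rw [hcomm]
      _ = (algebraMap A.K A.H) (ts - tsi) * (Xi * Xi) + ((algebraMap A.K A.H) (ts - tsi) * 1 + X * (X * T)) := by rw [hXXinv]
      _ = (algebraMap A.K A.H) (ts - tsi) * (Xi * Xi) + (algebraMap A.K A.H) (ts - tsi) + X * X * T := by noncomm_ring
  have hT0v : (A.T0v : A.H) = ((A.T1⁻¹ : A.Hˣ) : A.H) * (Xi * Xi) := by
    rw [A1DAHARep.T0v, mul_inv_rev, mul_inv_rev]
    simp [Units.val_mul, mul_assoc, hXi]
  have hkey : (T + (algebraMap A.K A.H) tsi) * (A.T0v : A.H)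
      = Xi * Xi + (algebraMap A.K A.H) (tsi * (ts - tsi)) + (algebraMap A.K A.H) tsi * (X * X) * T := by
    calc (T + (algebraMap A.K A.H) tsi) * (A.T0v : A.H)
        = (T * ((A.T1⁻¹ : A.Hˣ) : A.H)) * (Xi * Xi)
          + (algebraMap A.K A.H) tsi * (((A.T1⁻¹ : A.Hˣ) : A.H) * (Xi * Xi)) := by
          rw [hT0v]; noncomm_ring
      _ = Xi * Xi + (algebraMap A.K A.H) tsi * ((T - (algebraMap A.K A.H) (ts - tsi)) * (Xi * Xi)) := by
          rw [hTT, hT1inv, one_mul]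
      _ = Xi * Xi + (algebraMap A.K A.H) tsi * (T * (Xi * Xi)) - (algebraMap A.K A.H) tsi * ((algebraMap A.K A.H) (ts - tsi) * (Xi * Xi)) := by
          noncomm_ring
      _ = Xi * Xi + (algebraMap A.K A.H) tsi * ((algebraMap A.K A.H) (ts - tsi) * (Xi * Xi) + (algebraMap A.K A.H) (ts - tsi) + X * X * T)
            - (algebraMap A.K A.H) tsi * ((algebraMap A.K A.H) (ts - tsi) * (Xi * Xi)) := by rw [hTXX]
      _ = Xi * Xi + ((algebraMap A.K A.H) tsi * (algebraMap A.K A.H) (ts - tsi)) + (algebraMap A.K A.H) tsi * (X * X) * T := by noncomm_ring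
      _ = Xi * Xi + (algebraMap A.K A.H) (tsi * (ts - tsi)) + (algebraMap A.K A.H) tsi * (X * X) * T := by rw [← map_mul]
  -- module computations
  have hT1e : T • e = (algebraMap A.K A.H) ts • e := A.T1_one
  have hge : (A.g : A.H) • e = e := A.g_one
  have hYcoe : ((A.Yα : A.Hˣ) : A.H) = (A.g : A.H) * (T * ((A.g : A.H) * T)) := by
    rw [A1DAHARep.Yα]
    simp [Units.val_mul, mul_assoc, hT]
  have hYe : ((A.Yα : A.Hˣ) : A.H) • e = (algebraMap A.K A.H) A.t • e := by
    rw [hYcoe]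
    simp only [mul_smul, hT1e, hge, A1DAHAAux.scomm, A1DAHAAux.sc_sc]
    have : ts * ts = A.t := by rw [A1DAHARep.t, sq, hts]
    rw [this]
  have hYma0e : A.Yma0 • e = (algebraMap A.K A.H) (A.q * A.t) • e := by
    rw [A1DAHARep.Yma0, mul_smul, hYe, A1DAHAAux.sc_sc]
  have hsub : ((1 : A.H) - A.Yma0) • e = (algebraMap A.K A.H) ((1 : A.K) - A.q * A.t) • e := by
    rw [sub_smul, one_smul, hYma0e, map_sub, map_one, sub_smul, one_smul]
  have hinv : Ring.inverse ((1 : A.H) - A.Yma0) • e = (algebraMap A.K A.H) r • e := by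
    have h2 : Ring.inverse ((1 : A.H) - A.Yma0) * ((1 : A.H) - A.Yma0) = 1 :=
      Ring.inverse_mul_cancel _ h0
    calc Ring.inverse ((1 : A.H) - A.Yma0) • e
        = Ring.inverse ((1 : A.H) - A.Yma0) • ((algebraMap A.K A.H) r • (((1 : A.H) - A.Yma0) • e)) := by
          rw [hsub, A1DAHAAux.sc_sc, hr, map_one, one_smul]
      _ = (algebraMap A.K A.H) r • ((Ring.inverse ((1 : A.H) - A.Yma0) * ((1 : A.H) - A.Yma0)) • e) := by
          rw [A1DAHAAux.scomm, mul_smul]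
      _ = (algebraMap A.K A.H) r • e := by rw [h2, one_smul]
  have htau : A.tau0 • e = (A.T0v : A.H) • e + (algebraMap A.K A.H) (A.tfac * r) • e := by
    rw [A1DAHARep.tau0, add_smul, mul_smul, hinv, A1DAHAAux.sc_sc]
  -- scalar identity
  have ht' : A.t = ts * ts := by rw [A1DAHARep.t, pow_two]
  have htfac : A.tfac = tsi * (1 - A.t) := by rw [A1DAHARep.tfac]
  have hr' : r * ((1 : A.K) - A.q * (ts * ts)) = 1 := by rw [← ht']; exact hr
  have hscal : tsi * (ts - tsi) + (A.tfac * r * ts + tsi * (A.tfac * r))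
      = (1 + A.q) * (1 - A.t) * r := by
    refine hqt.mul_right_cancel ?_
    rw [htfac, ht']
    linear_combination (-1 - A.q + tsi^2 + ts*tsi + ts^2 + ts^2*A.q - ts^2*tsi^2
        - ts^3*tsi) * hr'
      + (1 + A.q - ts*tsi + ts*tsi*A.q - ts^2 - ts^2*A.q) * hst
  -- the main computation
  have hXXc : ((A.Xω * A.Xω : A.Hˣ) : A.H) = X * X := by simp [Units.val_mul, hX]
  have hXXic : (((A.Xω * A.Xω)⁻¹ : A.Hˣ) : A.H) = Xi * Xi := by
    rw [mul_inv_rev]; simp [Units.val_mul, hXi]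
  have hst' : tsi * ts = 1 := by rw [mul_comm]; exact hst
  calc ((T + (algebraMap A.K A.H) tsi) * A.tau0) • e
      = (T + (algebraMap A.K A.H) tsi) • (A.tau0 • e) := by rw [mul_smul]
    _ = ((T + (algebraMap A.K A.H) tsi) * (A.T0v : A.H)) • e
          + (T • ((algebraMap A.K A.H) (A.tfac * r) • e)
          + (algebraMap A.K A.H) tsi • ((algebraMap A.K A.H) (A.tfac * r) • e)) := by
        rw [htau, smul_add, ← mul_smul, add_smul]
    _ = (Xi * Xi + (algebraMap A.K A.H) (tsi * (ts - tsi))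
          + (algebraMap A.K A.H) tsi * (X * X) * T) • e
          + ((algebraMap A.K A.H) (A.tfac * r * ts) • e
          + (algebraMap A.K A.H) (tsi * (A.tfac * r)) • e) := by
        rw [hkey, A1DAHAAux.scomm, hT1e, A1DAHAAux.sc_sc, A1DAHAAux.sc_sc]
    _ = Xi • Xi • e + (algebraMap A.K A.H) (tsi * (ts - tsi)) • e
          + (algebraMap A.K A.H) tsi • X • X • T • e
          + ((algebraMap A.K A.H) (A.tfac * r * ts) • e
          + (algebraMap A.K A.H) (tsi * (A.tfac * r)) • e) := by
        simp only [add_smul, mul_smul]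
    _ = Xi • Xi • e + (algebraMap A.K A.H) (tsi * (ts - tsi)) • e + X • X • e
          + ((algebraMap A.K A.H) (A.tfac * r * ts) • e
          + (algebraMap A.K A.H) (tsi * (A.tfac * r)) • e) := by
        rw [hT1e, A1DAHAAux.scomm, A1DAHAAux.scomm, A1DAHAAux.sc_sc, hst', map_one,
          one_smul]
    _ = (((A.Xω * A.Xω : A.Hˣ) : A.H) + (((A.Xω * A.Xω)⁻¹ : A.Hˣ) : A.H)
          + (algebraMap A.K A.H) ((1 + A.q) * (1 - A.t)
              * Ring.inverse ((1 : A.K) - A.q * A.t))) • e := by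
        rw [hXXc, hXXic]
        simp only [add_smul, mul_smul]
        rw [← hrdef, ← hscal, map_add, map_add, add_smul, add_smul]
        abel

end
end

section
/- In the polynomial representation of the type A_2 double affine Hecke algebra with equal parameters, the symmetric Macdonald polynomial P_ρ = 1_0 E_ρ = 1_0 τ_0^∨ · 1 for ρ = α_1 + α_2 equals ( X^{w_0ρ} + X^{s_1s_2ρ} + X^{s_2s_1ρ} + X^{s_1ρ} + X^{s_2ρ} + X^{ρ} + (t + 2 + 2tq + q)(1−t)/(1−t²q) ) · 1. -/
noncomputable section

/-!
In the polynomial representation of the type `A₂` double affine Hecke algebra with equal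
parameters, the symmetric Macdonald polynomial `P_ρ = 𝟙₀E_ρ = 𝟙₀τ₀^∨·𝟙` for
`ρ = α₁+α₂` equals
`( X^{w₀ρ} + X^{s₁s₂ρ} + X^{s₂s₁ρ} + X^{s₁ρ} + X^{s₂ρ} + X^ρ
    + (t + 2 + 2tq + q)(1−t)/(1−t²q) )·𝟙`.
-/

/-- The type `A₂` double affine Hecke algebra with equal parameters, together with its
polynomial representation (`Tᵢ·𝟙 = t^{1/2}·𝟙`, `g·𝟙 = 𝟙`).  The scalars `q^{1/3}` and
`t^{1/2}` are units of the coefficient ring `K`. -/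
structure A2DAHARep where
  K : Type
  [commRingK : CommRing K]
  /-- `q^{1/3}` -/
  qc : Kˣ
  /-- `t^{1/2}` -/
  tsq : Kˣ
  H : Type
  [ringH : Ring H]
  [algH : Algebra K H]
  T0 : Hˣ
  T1 : Hˣ
  T2 : Hˣ
  g : Hˣ
  X1 : Hˣ
  X2 : Hˣ
  rel_br01 : T0 * T1 * T0 = T1 * T0 * T1
  rel_br02 : T0 * T2 * T0 = T2 * T0 * T2
  rel_br12 : T1 * T2 * T1 = T2 * T1 * T2
  rel_X : X1 * X2 = X2 * X1
  rel_T1X2 : T1 * X2 = X2 * T1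
  rel_T2X1 : T2 * X1 = X1 * T2
  rel_T1X1 : T1 * X1 * T1 = X1⁻¹ * X2
  rel_T2X2 : T2 * X2 * T2 = X1 * X2⁻¹
  rel_g3 : g * g * g = 1
  rel_gX1 : ((g * X1 : Hˣ) : H) = algebraMap K H (qc : K) * ((X1⁻¹ * X2 * g : Hˣ) : H)
  rel_gX2 : ((g * X2 : Hˣ) : H)
      = algebraMap K H ((qc : K) ^ 2) * ((X1⁻¹ * g : Hˣ) : H)
  rel_gT0 : g * T0 * g⁻¹ = T1
  rel_gT1 : g * T1 * g⁻¹ = T2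
  rel_gT2 : g * T2 * g⁻¹ = T0
  quad0 : ((T0 : H)) ^ 2
      = algebraMap K H ((tsq : K) - ((tsq⁻¹ : Kˣ) : K)) * (T0 : H) + 1
  quad1 : ((T1 : H)) ^ 2
      = algebraMap K H ((tsq : K) - ((tsq⁻¹ : Kˣ) : K)) * (T1 : H) + 1
  quad2 : ((T2 : H)) ^ 2
      = algebraMap K H ((tsq : K) - ((tsq⁻¹ : Kˣ) : K)) * (T2 : H) + 1
  /-- the polynomial representation -/
  M : Type
  [acgM : AddCommGroup M]
  [modM : Module H M]
  /-- the cyclic vector `𝟙` -/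
  one : M
  cyclic : ∀ m : M, ∃ h : H, h • one = m
  T0_one : (T0 : H) • one = algebraMap K H (tsq : K) • one
  T1_one : (T1 : H) • one = algebraMap K H (tsq : K) • one
  T2_one : (T2 : H) • one = algebraMap K H (tsq : K) • one
  g_one : (g : H) • one = one

attribute [instance] A2DAHARep.commRingK A2DAHARep.ringH A2DAHARep.algH
  A2DAHARep.acgM A2DAHARep.modM

namespace A2DAHARep

variable (A : A2DAHARep)

/-- `q = (q^{1/3})³`. -/
def q : A.K := (A.qc : A.K) ^ 3

/-- `t = (t^{1/2})²`. -/
def t : A.K := (A.tsq : A.K) ^ 2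

/-- `Y^{ω₁^∨} = gT₂T₁`. -/
def Y1 : A.Hˣ := A.g * A.T2 * A.T1

/-- `Y^{ω₂^∨} = g²T₁T₂`. -/
def Y2 : A.Hˣ := A.g * A.g * A.T1 * A.T2

/-- `Y^{φ^∨} = Y^{ω₁^∨+ω₂^∨}`, where `φ^∨ = α₁^∨+α₂^∨ = ω₁^∨+ω₂^∨`. -/
def Yφ : A.Hˣ := A.Y1 * A.Y2

/-- `Y^{-α₀^∨} = Y^{φ^∨-d} = qY^{φ^∨}`. -/
def Yma0 : A.H := algebraMap A.K A.H A.q * (A.Yφ : A.H)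

/-- The scalar `t^{-1/2}(1−t)`. -/
def tfac : A.K := ((A.tsq⁻¹ : A.Kˣ) : A.K) * (1 - A.t)

/-- `T₀^∨`, defined by `(T₀^∨)⁻¹ = X^φT₁^∨T₂^∨T₁^∨` with `X^φ = X^{ω₁+ω₂}`. -/
def T0v : A.Hˣ := (A.X1 * A.X2 * A.T1 * A.T2 * A.T1)⁻¹

/-- The intertwiner `τ₀^∨ = T₀^∨ + t^{-1/2}(1−t)/(1−Y^{-α₀^∨})`. -/
def tau0 : A.H :=
  (A.T0v : A.H) + algebraMap A.K A.H A.tfac * Ring.inverse (1 - A.Yma0)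

/-- The symmetrizer
`𝟙₀ = T_{s₁s₂s₁} + t^{-1/2}T_{s₁s₂} + t^{-1/2}T_{s₂s₁} + t⁻¹T_{s₁} + t⁻¹T_{s₂} + t^{-3/2}`. -/
def one0 : A.H :=
  ((A.T1 * A.T2 * A.T1 : A.Hˣ) : A.H)
    + algebraMap A.K A.H ((A.tsq⁻¹ : A.Kˣ) : A.K) *
        (((A.T1 * A.T2 : A.Hˣ) : A.H) + ((A.T2 * A.T1 : A.Hˣ) : A.H))
    + algebraMap A.K A.H (((A.tsq⁻¹ : A.Kˣ) : A.K) ^ 2) * ((A.T1 : A.H) + (A.T2 : A.H))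
    + algebraMap A.K A.H (((A.tsq⁻¹ : A.Kˣ) : A.K) ^ 3)

/-- `X^ρ = X^{ω₁+ω₂}`. -/
def Xρ : A.Hˣ := A.X1 * A.X2
/-- `X^{s₁ρ}`, `s₁ρ = -ω₁+2ω₂`. -/
def Xs1ρ : A.Hˣ := A.X1⁻¹ * A.X2 * A.X2
/-- `X^{s₂ρ}`, `s₂ρ = 2ω₁-ω₂`. -/
def Xs2ρ : A.Hˣ := A.X1 * A.X1 * A.X2⁻¹
/-- `X^{s₁s₂ρ}`, `s₁s₂ρ = -2ω₁+ω₂`. -/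
def Xs1s2ρ : A.Hˣ := A.X1⁻¹ * A.X1⁻¹ * A.X2
/-- `X^{s₂s₁ρ}`, `s₂s₁ρ = ω₁-2ω₂`. -/
def Xs2s1ρ : A.Hˣ := A.X1 * A.X2⁻¹ * A.X2⁻¹
/-- `X^{w₀ρ} = X^{-ρ}`. -/
def Xw0ρ : A.Hˣ := A.X1⁻¹ * A.X2⁻¹

end A2DAHARep

set_option maxRecDepth 10000
set_option maxHeartbeats 1600000

namespace A2DAHARep

variable (A : A2DAHARep)

/-- `M` as a `K`-module via `algebraMap`. -/
noncomputable instance : Module A.K A.M := Module.compHom A.M (algebraMap A.K A.H)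

lemma ksmul_def (k : A.K) (m : A.M) : k • m = algebraMap A.K A.H k • m := rfl

instance : IsScalarTower A.K A.H A.M :=
  ⟨fun k h m => by rw [Algebra.smul_def, mul_smul]; rfl⟩

instance : SMulCommClass A.K A.H A.M :=
  ⟨fun k h m => by
    rw [ksmul_def, ksmul_def, smul_smul, smul_smul, Algebra.commutes]⟩

lemma hswap (h : A.H) (k : A.K) (m : A.M) : h • (k • m) = k • (h • m) :=
  smul_comm k h m |>.symm


lemma HaddSmul (x y : A.H) (m : A.M) : (x + y) • m = x • m + y • m := add_smul x y m
lemma KaddSmul (x y : A.K) (m : A.M) : (x + y) • m = x • m + y • m := add_smul x y m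
lemma HmulSmul (x y : A.H) (m : A.M) : (x * y) • m = x • (y • m) := mul_smul x y m
lemma KsmulSmul (x y : A.K) (m : A.M) : x • (y • m) = (x * y) • m := smul_smul x y m
lemma HsmulAdd (x : A.H) (m n : A.M) : x • (m + n) = x • m + x • n := smul_add x m n
lemma KsmulAdd (x : A.K) (m n : A.M) : x • (m + n) = x • m + x • n := smul_add x m n

/-- abbreviation for `t^{1/2}` in `K` -/
lemma hss : (A.tsq : A.K) * ((A.tsq⁻¹ : A.Kˣ) : A.K) = 1 := Units.mul_inv _

lemma T1_mul_T1 : (A.T1 : A.H) * A.T1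
    = algebraMap A.K A.H ((A.tsq : A.K) - ((A.tsq⁻¹ : A.Kˣ) : A.K)) * A.T1 + 1 := by
  rw [← pow_two]; exact A.quad1

lemma T2_mul_T2 : (A.T2 : A.H) * A.T2
    = algebraMap A.K A.H ((A.tsq : A.K) - ((A.tsq⁻¹ : A.Kˣ) : A.K)) * A.T2 + 1 := by
  rw [← pow_two]; exact A.quad2

lemma T1_inv_coe : ((A.T1⁻¹ : A.Hˣ) : A.H)
    = (A.T1 : A.H) - algebraMap A.K A.H ((A.tsq : A.K) - ((A.tsq⁻¹ : A.Kˣ) : A.K)) := by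
  have h : (A.T1 : A.H) *
      ((A.T1 : A.H) - algebraMap A.K A.H ((A.tsq : A.K) - ((A.tsq⁻¹ : A.Kˣ) : A.K))) = 1 := by
    rw [mul_sub, A.T1_mul_T1, ← Algebra.commutes]; abel
  calc ((A.T1⁻¹ : A.Hˣ) : A.H)
      = ((A.T1⁻¹ : A.Hˣ) : A.H) * ((A.T1 : A.H) *
        ((A.T1 : A.H) - algebraMap A.K A.H ((A.tsq : A.K) - ((A.tsq⁻¹ : A.Kˣ) : A.K)))) := by
        rw [h, mul_one]
    _ = (((A.T1⁻¹ : A.Hˣ) : A.H) * (A.T1 : A.H)) *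
        ((A.T1 : A.H) - algebraMap A.K A.H ((A.tsq : A.K) - ((A.tsq⁻¹ : A.Kˣ) : A.K))) := by
        rw [mul_assoc]
    _ = _ := by rw [Units.inv_mul, one_mul]

lemma T2_inv_coe : ((A.T2⁻¹ : A.Hˣ) : A.H)
    = (A.T2 : A.H) - algebraMap A.K A.H ((A.tsq : A.K) - ((A.tsq⁻¹ : A.Kˣ) : A.K)) := by
  have h : (A.T2 : A.H) *
      ((A.T2 : A.H) - algebraMap A.K A.H ((A.tsq : A.K) - ((A.tsq⁻¹ : A.Kˣ) : A.K))) = 1 := by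
    rw [mul_sub, A.T2_mul_T2, ← Algebra.commutes]; abel
  calc ((A.T2⁻¹ : A.Hˣ) : A.H)
      = ((A.T2⁻¹ : A.Hˣ) : A.H) * ((A.T2 : A.H) *
        ((A.T2 : A.H) - algebraMap A.K A.H ((A.tsq : A.K) - ((A.tsq⁻¹ : A.Kˣ) : A.K)))) := by
        rw [h, mul_one]
    _ = (((A.T2⁻¹ : A.Hˣ) : A.H) * (A.T2 : A.H)) *
        ((A.T2 : A.H) - algebraMap A.K A.H ((A.tsq : A.K) - ((A.tsq⁻¹ : A.Kˣ) : A.K))) := by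
        rw [mul_assoc]
    _ = _ := by rw [Units.inv_mul, one_mul]

end A2DAHARep

namespace A2DAHARep

variable (A : A2DAHARep)

/-! ### Commutation facts among the generators (in `A.Hˣ`) -/

lemma cX : Commute A.X1 A.X2 := A.rel_X
lemma cT1X2 : Commute A.T1 A.X2 := A.rel_T1X2
lemma cT2X1 : Commute A.T2 A.X1 := A.rel_T2X1

/- sorting lemmas: push `X2`-letters to the right of `X1`-letters -/
lemma sX21 : A.X2 * A.X1 = A.X1 * A.X2 := (A.cX.symm).eq
lemma sX21' (c : A.Hˣ) : A.X2 * (A.X1 * c) = A.X1 * (A.X2 * c) := by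
  rw [← mul_assoc, A.sX21, mul_assoc]
lemma sX21i : A.X2 * A.X1⁻¹ = A.X1⁻¹ * A.X2 := (A.cX.symm.inv_right).eq
lemma sX21i' (c : A.Hˣ) : A.X2 * (A.X1⁻¹ * c) = A.X1⁻¹ * (A.X2 * c) := by
  rw [← mul_assoc, A.sX21i, mul_assoc]
lemma sX2i1 : A.X2⁻¹ * A.X1 = A.X1 * A.X2⁻¹ := (A.cX.inv_right.symm).eq
lemma sX2i1' (c : A.Hˣ) : A.X2⁻¹ * (A.X1 * c) = A.X1 * (A.X2⁻¹ * c) := by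
  rw [← mul_assoc, A.sX2i1, mul_assoc]
lemma sX2i1i : A.X2⁻¹ * A.X1⁻¹ = A.X1⁻¹ * A.X2⁻¹ := (A.cX.inv_inv.symm).eq
lemma sX2i1i' (c : A.Hˣ) : A.X2⁻¹ * (A.X1⁻¹ * c) = A.X1⁻¹ * (A.X2⁻¹ * c) := by
  rw [← mul_assoc, A.sX2i1i, mul_assoc]

/- push `T1`, `T1⁻¹` to the right past `X2`-letters -/
lemma sT1X2 : A.T1 * A.X2 = A.X2 * A.T1 := A.rel_T1X2
lemma sT1X2' (c : A.Hˣ) : A.T1 * (A.X2 * c) = A.X2 * (A.T1 * c) := by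
  rw [← mul_assoc, A.sT1X2, mul_assoc]
lemma sT1X2i : A.T1 * A.X2⁻¹ = A.X2⁻¹ * A.T1 := (A.cT1X2.inv_right).eq
lemma sT1X2i' (c : A.Hˣ) : A.T1 * (A.X2⁻¹ * c) = A.X2⁻¹ * (A.T1 * c) := by
  rw [← mul_assoc, A.sT1X2i, mul_assoc]
lemma sT1iX2 : A.T1⁻¹ * A.X2 = A.X2 * A.T1⁻¹ := (A.cT1X2.inv_left).eq
lemma sT1iX2' (c : A.Hˣ) : A.T1⁻¹ * (A.X2 * c) = A.X2 * (A.T1⁻¹ * c) := by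
  rw [← mul_assoc, A.sT1iX2, mul_assoc]
lemma sT1iX2i : A.T1⁻¹ * A.X2⁻¹ = A.X2⁻¹ * A.T1⁻¹ := (A.cT1X2.inv_inv).eq
lemma sT1iX2i' (c : A.Hˣ) : A.T1⁻¹ * (A.X2⁻¹ * c) = A.X2⁻¹ * (A.T1⁻¹ * c) := by
  rw [← mul_assoc, A.sT1iX2i, mul_assoc]

/- push `T2`, `T2⁻¹` to the right past `X1`-letters -/
lemma sT2X1 : A.T2 * A.X1 = A.X1 * A.T2 := A.rel_T2X1
lemma sT2X1' (c : A.Hˣ) : A.T2 * (A.X1 * c) = A.X1 * (A.T2 * c) := by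
  rw [← mul_assoc, A.sT2X1, mul_assoc]
lemma sT2X1i : A.T2 * A.X1⁻¹ = A.X1⁻¹ * A.T2 := (A.cT2X1.inv_right).eq
lemma sT2X1i' (c : A.Hˣ) : A.T2 * (A.X1⁻¹ * c) = A.X1⁻¹ * (A.T2 * c) := by
  rw [← mul_assoc, A.sT2X1i, mul_assoc]
lemma sT2iX1 : A.T2⁻¹ * A.X1 = A.X1 * A.T2⁻¹ := (A.cT2X1.inv_left).eq
lemma sT2iX1' (c : A.Hˣ) : A.T2⁻¹ * (A.X1 * c) = A.X1 * (A.T2⁻¹ * c) := by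
  rw [← mul_assoc, A.sT2iX1, mul_assoc]
lemma sT2iX1i : A.T2⁻¹ * A.X1⁻¹ = A.X1⁻¹ * A.T2⁻¹ := (A.cT2X1.inv_inv).eq
lemma sT2iX1i' (c : A.Hˣ) : A.T2⁻¹ * (A.X1⁻¹ * c) = A.X1⁻¹ * (A.T2⁻¹ * c) := by
  rw [← mul_assoc, A.sT2iX1i, mul_assoc]

/-! ### The nontrivial `T`–`X` moves -/

lemma U3 : A.T1 * A.X1 = A.X1⁻¹ * A.X2 * A.T1⁻¹ := by
  rw [eq_mul_inv_iff_mul_eq]; exact A.rel_T1X1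
lemma U3' (c : A.Hˣ) : A.T1 * (A.X1 * c) = A.X1⁻¹ * (A.X2 * (A.T1⁻¹ * c)) := by
  rw [← mul_assoc, A.U3, mul_assoc, mul_assoc]

lemma U4 : A.T2 * A.X2 = A.X1 * A.X2⁻¹ * A.T2⁻¹ := by
  rw [eq_mul_inv_iff_mul_eq]; exact A.rel_T2X2
lemma U4' (c : A.Hˣ) : A.T2 * (A.X2 * c) = A.X1 * (A.X2⁻¹ * (A.T2⁻¹ * c)) := by
  rw [← mul_assoc, A.U4, mul_assoc, mul_assoc]

lemma U1 : A.T1⁻¹ * A.X1⁻¹ = A.X1 * A.X2⁻¹ * A.T1 := by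
  rw [inv_mul_eq_iff_eq_mul]
  rw [mul_assoc A.X1 A.X2⁻¹ A.T1, ← A.sT1X2i, ← mul_assoc, ← mul_assoc]
  rw [A.rel_T1X1, mul_inv_cancel_right]
lemma U1' (c : A.Hˣ) : A.T1⁻¹ * (A.X1⁻¹ * c) = A.X1 * (A.X2⁻¹ * (A.T1 * c)) := by
  rw [← mul_assoc, A.U1, mul_assoc, mul_assoc]

lemma U2 : A.T2⁻¹ * A.X2⁻¹ = A.X2 * A.X1⁻¹ * A.T2 := by
  rw [inv_mul_eq_iff_eq_mul]
  rw [mul_assoc A.X2 A.X1⁻¹ A.T2, ← A.sT2X1i, ← mul_assoc, ← mul_assoc]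
  rw [A.rel_T2X2, mul_assoc, A.sX2i1i, mul_inv_cancel_left]
lemma U2' (c : A.Hˣ) : A.T2⁻¹ * (A.X2⁻¹ * c) = A.X2 * (A.X1⁻¹ * (A.T2 * c)) := by
  rw [← mul_assoc, A.U2, mul_assoc, mul_assoc]

end A2DAHARep

namespace A2DAHARep

variable (A : A2DAHARep)

/-! ### Monomial identities, proved by normalization -/

lemma UA : A.T1⁻¹ * A.Xw0ρ = A.Xs2s1ρ * A.T1 := by
  simp only [Xw0ρ, Xs2s1ρ, mul_assoc,
    A.sX21, A.sX21', A.sX21i, A.sX21i', A.sX2i1, A.sX2i1', A.sX2i1i, A.sX2i1i',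
    A.sT1X2, A.sT1X2', A.sT1X2i, A.sT1X2i', A.sT1iX2, A.sT1iX2', A.sT1iX2i, A.sT1iX2i',
    A.sT2X1, A.sT2X1', A.sT2X1i, A.sT2X1i', A.sT2iX1, A.sT2iX1', A.sT2iX1i, A.sT2iX1i',
    A.U1, A.U1', A.U2, A.U2', A.U3, A.U3', A.U4, A.U4',
    inv_mul_cancel_left, mul_inv_cancel_left, inv_mul_cancel, mul_inv_cancel,
    mul_one, one_mul]

lemma UB : A.T2⁻¹ * A.Xw0ρ = A.Xs1s2ρ * A.T2 := by
  simp only [Xw0ρ, Xs1s2ρ, mul_assoc,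
    A.sX21, A.sX21', A.sX21i, A.sX21i', A.sX2i1, A.sX2i1', A.sX2i1i, A.sX2i1i',
    A.sT1X2, A.sT1X2', A.sT1X2i, A.sT1X2i', A.sT1iX2, A.sT1iX2', A.sT1iX2i, A.sT1iX2i',
    A.sT2X1, A.sT2X1', A.sT2X1i, A.sT2X1i', A.sT2iX1, A.sT2iX1', A.sT2iX1i, A.sT2iX1i',
    A.U1, A.U1', A.U2, A.U2', A.U3, A.U3', A.U4, A.U4',
    inv_mul_cancel_left, mul_inv_cancel_left, inv_mul_cancel, mul_inv_cancel,
    mul_one, one_mul]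

lemma UE : A.T1 * A.Xs2s1ρ = A.Xw0ρ * A.T1⁻¹ := by
  simp only [Xw0ρ, Xs2s1ρ, mul_assoc,
    A.sX21, A.sX21', A.sX21i, A.sX21i', A.sX2i1, A.sX2i1', A.sX2i1i, A.sX2i1i',
    A.sT1X2, A.sT1X2', A.sT1X2i, A.sT1X2i', A.sT1iX2, A.sT1iX2', A.sT1iX2i, A.sT1iX2i',
    A.sT2X1, A.sT2X1', A.sT2X1i, A.sT2X1i', A.sT2iX1, A.sT2iX1', A.sT2iX1i, A.sT2iX1i',
    A.U1, A.U1', A.U2, A.U2', A.U3, A.U3', A.U4, A.U4',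
    inv_mul_cancel_left, mul_inv_cancel_left, inv_mul_cancel, mul_inv_cancel,
    mul_one, one_mul]

lemma UG : A.T1⁻¹ * A.Xs1ρ = A.Xρ * A.T1 := by
  simp only [Xρ, Xs1ρ, mul_assoc,
    A.sX21, A.sX21', A.sX21i, A.sX21i', A.sX2i1, A.sX2i1', A.sX2i1i, A.sX2i1i',
    A.sT1X2, A.sT1X2', A.sT1X2i, A.sT1X2i', A.sT1iX2, A.sT1iX2', A.sT1iX2i, A.sT1iX2i',
    A.sT2X1, A.sT2X1', A.sT2X1i, A.sT2X1i', A.sT2iX1, A.sT2iX1', A.sT2iX1i, A.sT2iX1i',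
    A.U1, A.U1', A.U2, A.U2', A.U3, A.U3', A.U4, A.U4',
    inv_mul_cancel_left, mul_inv_cancel_left, inv_mul_cancel, mul_inv_cancel,
    mul_one, one_mul]

lemma UN1 : A.T1⁻¹ * (A.X1⁻¹ * A.X2) = A.X1 * A.T1 := by
  simp only [mul_assoc,
    A.sX21, A.sX21', A.sX21i, A.sX21i', A.sX2i1, A.sX2i1', A.sX2i1i, A.sX2i1i',
    A.sT1X2, A.sT1X2', A.sT1X2i, A.sT1X2i', A.sT1iX2, A.sT1iX2', A.sT1iX2i, A.sT1iX2i',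
    A.sT2X1, A.sT2X1', A.sT2X1i, A.sT2X1i', A.sT2iX1, A.sT2iX1', A.sT2iX1i, A.sT2iX1i',
    A.U1, A.U1', A.U2, A.U2', A.U3, A.U3', A.U4, A.U4',
    inv_mul_cancel_left, mul_inv_cancel_left, inv_mul_cancel, mul_inv_cancel,
    mul_one, one_mul]

lemma UN2 : A.T2⁻¹ * (A.X2⁻¹ * A.X1) = A.X2 * A.T2 := by
  simp only [mul_assoc,
    A.sX21, A.sX21', A.sX21i, A.sX21i', A.sX2i1, A.sX2i1', A.sX2i1i, A.sX2i1i',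
    A.sT1X2, A.sT1X2', A.sT1X2i, A.sT1X2i', A.sT1iX2, A.sT1iX2', A.sT1iX2i, A.sT1iX2i',
    A.sT2X1, A.sT2X1', A.sT2X1i, A.sT2X1i', A.sT2iX1, A.sT2iX1', A.sT2iX1i, A.sT2iX1i',
    A.U1, A.U1', A.U2, A.U2', A.U3, A.U3', A.U4, A.U4',
    inv_mul_cancel_left, mul_inv_cancel_left, inv_mul_cancel, mul_inv_cancel,
    mul_one, one_mul]

lemma Usplit3 : A.Xs1s2ρ = A.X1⁻¹ * (A.X1⁻¹ * A.X2) := by rw [Xs1s2ρ, mul_assoc]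

lemma Usplit4 : A.Xs2s1ρ = A.X2⁻¹ * (A.X2⁻¹ * A.X1) := by
  simp only [Xs2s1ρ, mul_assoc,
    A.sX21, A.sX21', A.sX21i, A.sX21i', A.sX2i1, A.sX2i1', A.sX2i1i, A.sX2i1i',
    mul_one, one_mul]

lemma Ucan3 : A.X1 * A.X2⁻¹ * (A.X1⁻¹ * A.X2) = 1 := by
  simp only [mul_assoc,
    A.sX21, A.sX21', A.sX21i, A.sX21i', A.sX2i1, A.sX2i1', A.sX2i1i, A.sX2i1i',
    inv_mul_cancel_left, mul_inv_cancel_left, inv_mul_cancel, mul_inv_cancel,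
    mul_one, one_mul]

lemma Ucan3b : A.X1 * A.X2⁻¹ * A.X1 = A.Xs2ρ := by
  simp only [Xs2ρ, mul_assoc,
    A.sX21, A.sX21', A.sX21i, A.sX21i', A.sX2i1, A.sX2i1', A.sX2i1i, A.sX2i1i',
    mul_one, one_mul]

lemma Ucan4 : A.X2 * A.X1⁻¹ * (A.X2⁻¹ * A.X1) = 1 := by
  simp only [mul_assoc,
    A.sX21, A.sX21', A.sX21i, A.sX21i', A.sX2i1, A.sX2i1', A.sX2i1i, A.sX2i1i',
    inv_mul_cancel_left, mul_inv_cancel_left, inv_mul_cancel, mul_inv_cancel,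
    mul_one, one_mul]

lemma Ucan4b : A.X2 * A.X1⁻¹ * A.X2 = A.Xs1ρ := by
  simp only [Xs1ρ, mul_assoc,
    A.sX21, A.sX21', A.sX21i, A.sX21i', A.sX2i1, A.sX2i1', A.sX2i1i, A.sX2i1i',
    mul_one, one_mul]

lemma UT0v : A.T0v = A.T1⁻¹ * (A.T2⁻¹ * (A.T1⁻¹ * A.Xw0ρ)) := by
  simp only [T0v, Xw0ρ, mul_inv_rev, mul_assoc,
    A.sX21, A.sX21', A.sX21i, A.sX21i', A.sX2i1, A.sX2i1', A.sX2i1i, A.sX2i1i']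

end A2DAHARep

namespace A2DAHARep

variable (A : A2DAHARep)

lemma sps : ((A.tsq⁻¹ : A.Kˣ) : A.K) * (A.tsq : A.K) = 1 := Units.inv_mul _

lemma T1_one' : (A.T1 : A.H) • A.one = (A.tsq : A.K) • A.one := by
  rw [ksmul_def]; exact A.T1_one

lemma T2_one' : (A.T2 : A.H) • A.one = (A.tsq : A.K) • A.one := by
  rw [ksmul_def]; exact A.T2_one

lemma T1inv_one : ((A.T1⁻¹ : A.Hˣ) : A.H) • A.one = ((A.tsq⁻¹ : A.Kˣ) : A.K) • A.one := by
  have h1 : ((A.T1⁻¹ : A.Hˣ) : A.H) • ((A.T1 : A.H) • A.one) = A.one := by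
    rw [← mul_smul, ← Units.val_mul, inv_mul_cancel, Units.val_one, one_smul]
  rw [A.T1_one', A.hswap] at h1
  calc ((A.T1⁻¹ : A.Hˣ) : A.H) • A.one
      = (((A.tsq⁻¹ : A.Kˣ) : A.K) * (A.tsq : A.K)) • (((A.T1⁻¹ : A.Hˣ) : A.H) • A.one) := by
        rw [A.sps, one_smul]
    _ = ((A.tsq⁻¹ : A.Kˣ) : A.K) • ((A.tsq : A.K) • (((A.T1⁻¹ : A.Hˣ) : A.H) • A.one)) := by
        rw [mul_smul]
    _ = ((A.tsq⁻¹ : A.Kˣ) : A.K) • A.one := by rw [h1]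

lemma T2inv_one : ((A.T2⁻¹ : A.Hˣ) : A.H) • A.one = ((A.tsq⁻¹ : A.Kˣ) : A.K) • A.one := by
  have h1 : ((A.T2⁻¹ : A.Hˣ) : A.H) • ((A.T2 : A.H) • A.one) = A.one := by
    rw [← mul_smul, ← Units.val_mul, inv_mul_cancel, Units.val_one, one_smul]
  rw [A.T2_one', A.hswap] at h1
  calc ((A.T2⁻¹ : A.Hˣ) : A.H) • A.one
      = (((A.tsq⁻¹ : A.Kˣ) : A.K) * (A.tsq : A.K)) • (((A.T2⁻¹ : A.Hˣ) : A.H) • A.one) := by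
        rw [A.sps, one_smul]
    _ = ((A.tsq⁻¹ : A.Kˣ) : A.K) • ((A.tsq : A.K) • (((A.T2⁻¹ : A.Hˣ) : A.H) • A.one)) := by
        rw [mul_smul]
    _ = ((A.tsq⁻¹ : A.Kˣ) : A.K) • A.one := by rw [h1]

/-- The basic intertwining step on the polynomial representation. -/
lemma key_step (T XA XB : A.Hˣ)
    (hinv : ((T⁻¹ : A.Hˣ) : A.H)
      = (T : A.H) - algebraMap A.K A.H ((A.tsq : A.K) - ((A.tsq⁻¹ : A.Kˣ) : A.K)))
    (hU : T⁻¹ * XA = XB * T)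
    (hT : (T : A.H) • A.one = (A.tsq : A.K) • A.one) :
    (T : A.H) • ((XA : A.H) • A.one)
      = ((A.tsq : A.K) - ((A.tsq⁻¹ : A.Kˣ) : A.K)) • ((XA : A.H) • A.one)
        + (A.tsq : A.K) • ((XB : A.H) • A.one) := by
  have h1 : ((T⁻¹ : A.Hˣ) : A.H) • ((XA : A.H) • A.one)
      = (A.tsq : A.K) • ((XB : A.H) • A.one) := by
    rw [← mul_smul, ← Units.val_mul, hU, Units.val_mul, mul_smul, hT, A.hswap]
  rw [hinv, sub_smul, ← ksmul_def, sub_eq_iff_eq_add] at h1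
  rw [h1]; abel

/-- The step where `T` moves a monomial to a smaller one. -/
lemma key_step' (T XA XB : A.Hˣ) (hU : T * XA = XB * T⁻¹)
    (hTinv : ((T⁻¹ : A.Hˣ) : A.H) • A.one = ((A.tsq⁻¹ : A.Kˣ) : A.K) • A.one) :
    (T : A.H) • ((XA : A.H) • A.one)
      = ((A.tsq⁻¹ : A.Kˣ) : A.K) • ((XB : A.H) • A.one) := by
  rw [← mul_smul, ← Units.val_mul, hU, Units.val_mul, mul_smul, hTinv, A.hswap]

lemma m1 : (A.T1 : A.H) • ((A.Xw0ρ : A.H) • A.one)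
    = ((A.tsq : A.K) - ((A.tsq⁻¹ : A.Kˣ) : A.K)) • ((A.Xw0ρ : A.H) • A.one)
      + (A.tsq : A.K) • ((A.Xs2s1ρ : A.H) • A.one) :=
  A.key_step A.T1 A.Xw0ρ A.Xs2s1ρ A.T1_inv_coe A.UA A.T1_one'

lemma m2 : (A.T2 : A.H) • ((A.Xw0ρ : A.H) • A.one)
    = ((A.tsq : A.K) - ((A.tsq⁻¹ : A.Kˣ) : A.K)) • ((A.Xw0ρ : A.H) • A.one)
      + (A.tsq : A.K) • ((A.Xs1s2ρ : A.H) • A.one) :=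
  A.key_step A.T2 A.Xw0ρ A.Xs1s2ρ A.T2_inv_coe A.UB A.T2_one'

lemma m5 : (A.T1 : A.H) • ((A.Xs2s1ρ : A.H) • A.one)
    = ((A.tsq⁻¹ : A.Kˣ) : A.K) • ((A.Xw0ρ : A.H) • A.one) :=
  A.key_step' A.T1 A.Xs2s1ρ A.Xw0ρ A.UE A.T1inv_one

lemma m6 : (A.T1 : A.H) • ((A.Xs1ρ : A.H) • A.one)
    = ((A.tsq : A.K) - ((A.tsq⁻¹ : A.Kˣ) : A.K)) • ((A.Xs1ρ : A.H) • A.one)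
      + (A.tsq : A.K) • ((A.Xρ : A.H) • A.one) :=
  A.key_step A.T1 A.Xs1ρ A.Xρ A.T1_inv_coe A.UG A.T1_one'

lemma R1H : (A.T1 : A.H) * ((A.X1⁻¹ : A.Hˣ) : A.H)
    = algebraMap A.K A.H ((A.tsq : A.K) - ((A.tsq⁻¹ : A.Kˣ) : A.K)) * ((A.X1⁻¹ : A.Hˣ) : A.H)
      + ((A.X1 * A.X2⁻¹ : A.Hˣ) : A.H) * (A.T1 : A.H) := by
  have h : ((A.T1⁻¹ * A.X1⁻¹ : A.Hˣ) : A.H) = ((A.X1 * A.X2⁻¹ * A.T1 : A.Hˣ) : A.H) :=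
    congrArg Units.val A.U1
  rw [Units.val_mul, Units.val_mul, A.T1_inv_coe, sub_mul] at h
  rw [← h]; abel

lemma R2H : (A.T2 : A.H) * ((A.X2⁻¹ : A.Hˣ) : A.H)
    = algebraMap A.K A.H ((A.tsq : A.K) - ((A.tsq⁻¹ : A.Kˣ) : A.K)) * ((A.X2⁻¹ : A.Hˣ) : A.H)
      + ((A.X2 * A.X1⁻¹ : A.Hˣ) : A.H) * (A.T2 : A.H) := by
  have h : ((A.T2⁻¹ * A.X2⁻¹ : A.Hˣ) : A.H) = ((A.X2 * A.X1⁻¹ * A.T2 : A.Hˣ) : A.H) :=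
    congrArg Units.val A.U2
  rw [Units.val_mul, Units.val_mul, A.T2_inv_coe, sub_mul] at h
  rw [← h]; abel

lemma m3 : (A.T1 : A.H) • ((A.Xs1s2ρ : A.H) • A.one)
    = ((A.tsq : A.K) - ((A.tsq⁻¹ : A.Kˣ) : A.K)) • ((A.Xs1s2ρ : A.H) • A.one)
      + ((A.tsq : A.K) - ((A.tsq⁻¹ : A.Kˣ) : A.K)) • A.one
      + (A.tsq : A.K) • ((A.Xs2ρ : A.H) • A.one) := by
  have hinner : (A.T1 : A.H) • (((A.X1⁻¹ * A.X2 : A.Hˣ) : A.H) • A.one)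
      = ((A.tsq : A.K) - ((A.tsq⁻¹ : A.Kˣ) : A.K)) • (((A.X1⁻¹ * A.X2 : A.Hˣ) : A.H) • A.one)
        + (A.tsq : A.K) • ((A.X1 : A.H) • A.one) :=
    A.key_step A.T1 (A.X1⁻¹ * A.X2) A.X1 A.T1_inv_coe A.UN1 A.T1_one'
  have hcan : ((A.X1 * A.X2⁻¹ : A.Hˣ) : A.H) • (((A.X1⁻¹ * A.X2 : A.Hˣ) : A.H) • A.one)
      = A.one := by
    rw [← mul_smul, ← Units.val_mul, A.Ucan3, Units.val_one, one_smul]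
  have hcanb : ((A.X1 * A.X2⁻¹ : A.Hˣ) : A.H) • ((A.X1 : A.H) • A.one)
      = (A.Xs2ρ : A.H) • A.one := by
    rw [← mul_smul, ← Units.val_mul, A.Ucan3b]
  have hX : (A.Xs1s2ρ : A.H) • A.one
      = ((A.X1⁻¹ : A.Hˣ) : A.H) • (((A.X1⁻¹ * A.X2 : A.Hˣ) : A.H) • A.one) := by
    rw [← mul_smul, ← Units.val_mul]
    exact congrArg (· • A.one) (congrArg Units.val A.Usplit3)
  rw [hX, ← mul_smul, A.R1H, add_smul, mul_smul, mul_smul, hinner,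
    smul_add, A.hswap, A.hswap, hcan, hcanb, ← ksmul_def]
  abel

lemma m4 : (A.T2 : A.H) • ((A.Xs2s1ρ : A.H) • A.one)
    = ((A.tsq : A.K) - ((A.tsq⁻¹ : A.Kˣ) : A.K)) • ((A.Xs2s1ρ : A.H) • A.one)
      + ((A.tsq : A.K) - ((A.tsq⁻¹ : A.Kˣ) : A.K)) • A.one
      + (A.tsq : A.K) • ((A.Xs1ρ : A.H) • A.one) := by
  have hinner : (A.T2 : A.H) • (((A.X2⁻¹ * A.X1 : A.Hˣ) : A.H) • A.one)
      = ((A.tsq : A.K) - ((A.tsq⁻¹ : A.Kˣ) : A.K)) • (((A.X2⁻¹ * A.X1 : A.Hˣ) : A.H) • A.one)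
        + (A.tsq : A.K) • ((A.X2 : A.H) • A.one) :=
    A.key_step A.T2 (A.X2⁻¹ * A.X1) A.X2 A.T2_inv_coe A.UN2 A.T2_one'
  have hcan : ((A.X2 * A.X1⁻¹ : A.Hˣ) : A.H) • (((A.X2⁻¹ * A.X1 : A.Hˣ) : A.H) • A.one)
      = A.one := by
    rw [← mul_smul, ← Units.val_mul, A.Ucan4, Units.val_one, one_smul]
  have hcanb : ((A.X2 * A.X1⁻¹ : A.Hˣ) : A.H) • ((A.X2 : A.H) • A.one)
      = (A.Xs1ρ : A.H) • A.one := by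
    rw [← mul_smul, ← Units.val_mul, A.Ucan4b]
  have hX : (A.Xs2s1ρ : A.H) • A.one
      = ((A.X2⁻¹ : A.Hˣ) : A.H) • (((A.X2⁻¹ * A.X1 : A.Hˣ) : A.H) • A.one) := by
    rw [← mul_smul, ← Units.val_mul]
    exact congrArg (· • A.one) (congrArg Units.val A.Usplit4)
  rw [hX, ← mul_smul, A.R2H, add_smul, mul_smul, mul_smul, hinner,
    smul_add, A.hswap, A.hswap, hcan, hcanb, ← ksmul_def]
  abel

end A2DAHARep

namespace A2DAHARep

variable (A : A2DAHARep)

lemma hbr : (A.T1 : A.H) * ((A.T2 : A.H) * (A.T1 : A.H))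
    = (A.T2 : A.H) * ((A.T1 : A.H) * (A.T2 : A.H)) := by
  have h := congrArg Units.val A.rel_br12
  simpa [Units.val_mul, mul_assoc] using h

lemma hbr2 : (A.T1 : A.H) * ((A.T2 : A.H) * ((A.T1 : A.H) * (A.T2 : A.H)))
    = (A.T2 : A.H) * ((A.T1 : A.H) * ((A.T2 : A.H) * (A.T2 : A.H))) := by
  have h := congrArg (fun z => z * (A.T2 : A.H)) A.hbr
  simpa [mul_assoc] using h

lemma oT1 : A.one0 * (A.T1 : A.H) = (A.tsq : A.K) • A.one0 := by
  simp only [one0, Units.val_mul, add_mul, mul_add, mul_assoc, one_mul, mul_one,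
    A.T1_mul_T1, Algebra.algebraMap_eq_smul_one, smul_mul_assoc,
    mul_smul_comm, smul_add, smul_smul]
  match_scalars <;>
    first
      | ring1
      | linear_combination (-1 : A.K) * A.hss
      | linear_combination (-((A.tsq⁻¹ : A.Kˣ) : A.K)) * A.hss
      | linear_combination (-(((A.tsq⁻¹ : A.Kˣ) : A.K) ^ 2)) * A.hss
      | linear_combination (-(((A.tsq⁻¹ : A.Kˣ) : A.K) ^ 3)) * A.hss

lemma oT2 : A.one0 * (A.T2 : A.H) = (A.tsq : A.K) • A.one0 := by
  simp only [one0, Units.val_mul, add_mul, mul_add, mul_assoc, one_mul, mul_one,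
    A.hbr, A.hbr2, A.T1_mul_T1, A.T2_mul_T2, Algebra.algebraMap_eq_smul_one,
    smul_mul_assoc, mul_smul_comm, smul_add, smul_smul]
  match_scalars <;>
    first
      | ring1
      | linear_combination (-1 : A.K) * A.hss
      | linear_combination (-((A.tsq⁻¹ : A.Kˣ) : A.K)) * A.hss
      | linear_combination (-(((A.tsq⁻¹ : A.Kˣ) : A.K) ^ 2)) * A.hss
      | linear_combination (-(((A.tsq⁻¹ : A.Kˣ) : A.K) ^ 3)) * A.hss

lemma oT1inv : A.one0 * ((A.T1⁻¹ : A.Hˣ) : A.H) = ((A.tsq⁻¹ : A.Kˣ) : A.K) • A.one0 := by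
  have h := congrArg (fun z => z * ((A.T1⁻¹ : A.Hˣ) : A.H)) A.oT1
  simp only [mul_assoc, smul_mul_assoc] at h
  rw [← Units.val_mul, mul_inv_cancel, Units.val_one, mul_one] at h
  calc A.one0 * ((A.T1⁻¹ : A.Hˣ) : A.H)
      = (((A.tsq⁻¹ : A.Kˣ) : A.K) * (A.tsq : A.K)) • (A.one0 * ((A.T1⁻¹ : A.Hˣ) : A.H)) := by
        rw [A.sps, one_smul]
    _ = ((A.tsq⁻¹ : A.Kˣ) : A.K) • ((A.tsq : A.K) • (A.one0 * ((A.T1⁻¹ : A.Hˣ) : A.H))) := by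
        rw [mul_smul]
    _ = ((A.tsq⁻¹ : A.Kˣ) : A.K) • A.one0 := by
        rw [← smul_mul_assoc, ← A.oT1, mul_assoc, ← Units.val_mul, mul_inv_cancel,
          Units.val_one, mul_one]

lemma oT2inv : A.one0 * ((A.T2⁻¹ : A.Hˣ) : A.H) = ((A.tsq⁻¹ : A.Kˣ) : A.K) • A.one0 := by
  calc A.one0 * ((A.T2⁻¹ : A.Hˣ) : A.H)
      = (((A.tsq⁻¹ : A.Kˣ) : A.K) * (A.tsq : A.K)) • (A.one0 * ((A.T2⁻¹ : A.Hˣ) : A.H)) := by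
        rw [A.sps, one_smul]
    _ = ((A.tsq⁻¹ : A.Kˣ) : A.K) • ((A.tsq : A.K) • (A.one0 * ((A.T2⁻¹ : A.Hˣ) : A.H))) := by
        rw [mul_smul]
    _ = ((A.tsq⁻¹ : A.Kˣ) : A.K) • A.one0 := by
        rw [← smul_mul_assoc, ← A.oT2, mul_assoc, ← Units.val_mul, mul_inv_cancel,
          Units.val_one, mul_one]

lemma one0_T0v : A.one0 * ((A.T0v : A.Hˣ) : A.H)
    = (((A.tsq⁻¹ : A.Kˣ) : A.K) ^ 3) • (A.one0 * ((A.Xw0ρ : A.Hˣ) : A.H)) := by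
  rw [congrArg Units.val A.UT0v]
  simp only [Units.val_mul]
  rw [← mul_assoc, ← mul_assoc, ← mul_assoc, A.oT1inv, smul_mul_assoc, smul_mul_assoc,
    smul_mul_assoc, A.oT2inv, smul_mul_assoc, smul_mul_assoc, A.oT1inv, smul_mul_assoc,
    smul_smul, smul_smul]
  match_scalars
  ring

lemma hswapH (h : A.H) (k : A.K) (m : A.M) :
    h • (algebraMap A.K A.H k • m) = algebraMap A.K A.H k • (h • m) := by
  rw [smul_smul, smul_smul, Algebra.commutes]

lemma Yφ_one : ((A.Yφ : A.Hˣ) : A.H) • A.one = ((A.tsq : A.K) ^ 4) • A.one := by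
  rw [A.ksmul_def]
  simp only [Yφ, Y1, Y2, Units.val_mul, mul_smul, A.T1_one, A.T2_one, A.hswapH,
    A.g_one, smul_smul, ← map_mul]
  congr 1
  congr 1
  ring

lemma Yma0_one : ((1 : A.H) - A.Yma0) • A.one = ((1 : A.K) - A.t ^ 2 * A.q) • A.one := by
  have hsc : A.t ^ 2 * A.q = A.q * (A.tsq : A.K) ^ 4 := by rw [t]; ring
  rw [sub_smul, one_smul, Yma0, mul_smul, A.Yφ_one, ← A.ksmul_def, smul_smul, sub_smul,
    one_smul, hsc]

end A2DAHARep


/-- in the polynomial representation of the type `A₂` double affine Hecke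
algebra with equal parameters, the symmetric Macdonald polynomial
`P_ρ = 𝟙₀E_ρ = 𝟙₀τ₀^∨·𝟙` for `ρ = α₁+α₂` equals
`( X^{w₀ρ} + X^{s₁s₂ρ} + X^{s₂s₁ρ} + X^{s₁ρ} + X^{s₂ρ} + X^ρ
    + (t+2+2tq+q)(1−t)/(1−t²q) )·𝟙`. -/
theorem statement16 (A : A2DAHARep)
    (h0 : IsUnit ((1 : A.H) - A.Yma0))
    (hK : IsUnit ((1 : A.K) - A.t ^ 2 * A.q)) :
    (A.one0 * A.tau0) • A.one =
      ((A.Xw0ρ : A.H) + (A.Xs1s2ρ : A.H) + (A.Xs2s1ρ : A.H)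
          + (A.Xs1ρ : A.H) + (A.Xs2ρ : A.H) + (A.Xρ : A.H)
        + algebraMap A.K A.H
            ((A.t + 2 + 2 * A.t * A.q + A.q) * (1 - A.t) *
              Ring.inverse (1 - A.t ^ 2 * A.q))) • A.one := by
  classical
  have hK1 : Ring.inverse ((1 : A.K) - A.t ^ 2 * A.q) * ((1 : A.K) - A.t ^ 2 * A.q) = 1 :=
    Ring.inverse_mul_cancel _ hK
  have hH1 : Ring.inverse ((1 : A.H) - A.Yma0) * ((1 : A.H) - A.Yma0) = 1 :=
    Ring.inverse_mul_cancel _ h0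
  have h2 : ((1 : A.H) - A.Yma0) • (Ring.inverse ((1 : A.K) - A.t ^ 2 * A.q) • A.one)
      = A.one := by
    rw [A.hswap, A.Yma0_one, smul_smul, hK1, one_smul]
  have hr : Ring.inverse ((1 : A.H) - A.Yma0) • A.one
      = Ring.inverse ((1 : A.K) - A.t ^ 2 * A.q) • A.one := by
    calc Ring.inverse ((1 : A.H) - A.Yma0) • A.one
        = Ring.inverse ((1 : A.H) - A.Yma0) •
            (((1 : A.H) - A.Yma0) • (Ring.inverse ((1 : A.K) - A.t ^ 2 * A.q) • A.one)) := by
          rw [h2]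
      _ = (Ring.inverse ((1 : A.H) - A.Yma0) * ((1 : A.H) - A.Yma0)) •
            (Ring.inverse ((1 : A.K) - A.t ^ 2 * A.q) • A.one) := by rw [mul_smul]
      _ = _ := by rw [hH1, one_smul]
  have hone0_one : A.one0 • A.one
      = ((A.tsq : A.K) ^ 3 + 2 * (((A.tsq⁻¹ : A.Kˣ) : A.K) * (A.tsq : A.K) ^ 2)
          + 2 * (((A.tsq⁻¹ : A.Kˣ) : A.K) ^ 2 * (A.tsq : A.K))
          + ((A.tsq⁻¹ : A.Kˣ) : A.K) ^ 3) • A.one := by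
    simp only [A2DAHARep.one0, A.HaddSmul, Units.val_mul, A.HmulSmul, ← A.ksmul_def,
      A.KsmulAdd, A.T1_one', A.T2_one', A.hswap, A.KsmulSmul]
    match_scalars
    ring
  have hterm2 : (A.one0 * (algebraMap A.K A.H A.tfac * Ring.inverse (1 - A.Yma0))) • A.one
      = (A.tfac * Ring.inverse ((1 : A.K) - A.t ^ 2 * A.q)
          * ((A.tsq : A.K) ^ 3 + 2 * (((A.tsq⁻¹ : A.Kˣ) : A.K) * (A.tsq : A.K) ^ 2)
            + 2 * (((A.tsq⁻¹ : A.Kˣ) : A.K) ^ 2 * (A.tsq : A.K))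
            + ((A.tsq⁻¹ : A.Kˣ) : A.K) ^ 3)) • A.one := by
    rw [mul_smul, mul_smul, hr, ← A.ksmul_def, A.hswap, A.hswap, hone0_one,
      A.KsmulSmul, A.KsmulSmul, ← mul_assoc]
  rw [A2DAHARep.tau0, mul_add, add_smul, A.one0_T0v, smul_assoc, mul_smul, hterm2]
  simp only [A2DAHARep.one0, A.HaddSmul, Units.val_mul, A.HmulSmul, ← A.ksmul_def,
    A.KsmulAdd, A.HsmulAdd, A.m1, A.m2, A.m3, A.m4, A.m5, A.m6, A.T1_one', A.T2_one',
    A.hswap, A.KsmulSmul]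
  simp only [A2DAHARep.t, A2DAHARep.tfac] at hK1 ⊢
  generalize ((A.Xρ : A.H) • A.one) = w1
  generalize ((A.Xs1ρ : A.H) • A.one) = w2
  generalize ((A.Xs2ρ : A.H) • A.one) = w3
  generalize ((A.Xs1s2ρ : A.H) • A.one) = w4
  generalize ((A.Xs2s1ρ : A.H) • A.one) = w5
  generalize ((A.Xw0ρ : A.H) • A.one) = w6
  match_scalars
  · linear_combination ((1 : A.K) + (A.tsq : A.K) * ((A.tsq⁻¹ : A.Kˣ) : A.K) + (A.tsq : A.K) ^ 2 * ((A.tsq⁻¹ : A.Kˣ) : A.K) ^ 2) * A.hss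
  · linear_combination ((1 : A.K) + (A.tsq : A.K) * ((A.tsq⁻¹ : A.Kˣ) : A.K) + (A.tsq : A.K) ^ 2 * ((A.tsq⁻¹ : A.Kˣ) : A.K) ^ 2) * A.hss
  · linear_combination ((1 : A.K) + (A.tsq : A.K) * ((A.tsq⁻¹ : A.Kˣ) : A.K) + (A.tsq : A.K) ^ 2 * ((A.tsq⁻¹ : A.Kˣ) : A.K) ^ 2) * A.hss
  · linear_combination ((2 : A.K) + A.q * Ring.inverse (1 - ((A.tsq : A.K) ^ 2) ^ 2 * A.q) + (-1 : A.K) * ((A.tsq⁻¹ : A.Kˣ) : A.K) ^ 2 + ((A.tsq⁻¹ : A.Kˣ) : A.K) ^ 2 * Ring.inverse (1 - ((A.tsq : A.K) ^ 2) ^ 2 * A.q) + (-1 : A.K) * ((A.tsq⁻¹ : A.Kˣ) : A.K) ^ 4 + (2 : A.K) * (A.tsq : A.K) * ((A.tsq⁻¹ : A.Kˣ) : A.K) + (A.tsq : A.K) * ((A.tsq⁻¹ : A.Kˣ) : A.K) * A.q * Ring.inverse (1 - ((A.tsq : A.K) ^ 2) ^ 2 * A.q) + (-1 : A.K) * (A.tsq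 : A.K) * ((A.tsq⁻¹ : A.Kˣ) : A.K) ^ 3 + (-1 : A.K) * (A.tsq : A.K) * ((A.tsq⁻¹ : A.Kˣ) : A.K) ^ 3 * Ring.inverse (1 - ((A.tsq : A.K) ^ 2) ^ 2 * A.q) + (-1 : A.K) * (A.tsq : A.K) ^ 2 * Ring.inverse (1 - ((A.tsq : A.K) ^ 2) ^ 2 * A.q) + (A.tsq : A.K) ^ 2 * A.q * Ring.inverse (1 - ((A.tsq : A.K) ^ 2) ^ 2 * A.q) + (2 : A.K) * (A.tsq : A.K) ^ 2 * ((A.tsq⁻¹ : A.Kˣ) : A.K) ^ 2 + (-2 : A.K) * (A.tsq : A.K) ^ 2 * ((A.tsq⁻¹ : A.Kˣ) : A.K) ^ 2 * Ring.inverse (1 - ((A.tsq : A.K) ^ 2) ^ 2 * A.q) + (A.tsq : A.K) ^ 2 * ((A.tsq⁻¹ : A.Kˣ) : A.K) ^ 2 * A.q * Ring.inverse (1 - ((A.tsq : A.K) ^ 2) ^ 2 * A.q) + (-2 : A.K) * (A.tsq : A.K) ^ 3 * ((A.tsq⁻¹ : A.Kˣ) : A.K) * Ring.inverse (1 - ((A.tsq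 : A.K) ^ 2) ^ 2 * A.q) + (A.tsq : A.K) ^ 3 * ((A.tsq⁻¹ : A.Kˣ) : A.K) * A.q * Ring.inverse (1 - ((A.tsq : A.K) ^ 2) ^ 2 * A.q) + (A.tsq : A.K) ^ 3 * ((A.tsq⁻¹ : A.Kˣ) : A.K) ^ 3 * A.q * Ring.inverse (1 - ((A.tsq : A.K) ^ 2) ^ 2 * A.q) + (-1 : A.K) * (A.tsq : A.K) ^ 4 * Ring.inverse (1 - ((A.tsq : A.K) ^ 2) ^ 2 * A.q)) * A.hss + ((-2 : A.K) + ((A.tsq⁻¹ : A.Kˣ) : A.K) ^ 2 + ((A.tsq⁻¹ : A.Kˣ) : A.K) ^ 4) * hK1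
  · linear_combination ((1 : A.K) + (A.tsq : A.K) * ((A.tsq⁻¹ : A.Kˣ) : A.K) + (A.tsq : A.K) ^ 2 * ((A.tsq⁻¹ : A.Kˣ) : A.K) ^ 2) * A.hss
  · linear_combination ((1 : A.K) + (A.tsq : A.K) * ((A.tsq⁻¹ : A.Kˣ) : A.K) + (A.tsq : A.K) ^ 2 * ((A.tsq⁻¹ : A.Kˣ) : A.K) ^ 2) * A.hss
  · linear_combination ((1 : A.K) + (A.tsq : A.K) * ((A.tsq⁻¹ : A.Kˣ) : A.K) + (A.tsq : A.K) ^ 2 * ((A.tsq⁻¹ : A.Kˣ) : A.K) ^ 2) * A.hss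


end
end
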